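/- arXiv:0709.2941 — 6 statements merged into one kernel-verified Lean document; each statement's English description precedes it below -/
import Mathlib

section
/- For a finitely generated infinite group G with symmetric generating set S, the space D_p(G) of functions f : G → ℂ with ∑_{g∈G} |f(gs⁻¹) − f(g)|^p < ∞ for all s ∈ S, equipped with the norm ‖f‖_{D_p} = (∑_{s∈S} ∑_{g∈G} |f(gs⁻¹) − f(g)|^p + |f(e)|^p)^{1/p}, is a Banach space (complete normed space). -/
open Filter Topology

namespace PHB

variable {G : Type*} [Group G]

/-- One Dirichlet term `‖f(gs⁻¹) − f(g)‖^p`. -/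
noncomputable def dpTerm (p : ℝ) (f : G → ℂ) (s g : G) : ℝ := ‖f (g * s⁻¹) - f g‖ ^ p

/-- Membership in `D_p(G)`. -/
def MemDp (p : ℝ) (S : Finset G) (f : G → ℂ) : Prop :=
  ∀ s ∈ S, Summable (dpTerm p f s)

/-- The Dirichlet `p`-sum `∑_{s∈S}∑_{g∈G} ‖f(gs⁻¹) − f(g)‖^p`. -/
noncomputable def dirSum (p : ℝ) (S : Finset G) (f : G → ℂ) : ℝ :=
  ∑ s ∈ S, ∑' g, dpTerm p f s g

/-- The `D_p`-norm `(∑_{s,g}|f(gs⁻¹)−f(g)|^p + |f(e)|^p)^{1/p}`. -/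
noncomputable def dpNorm (p : ℝ) (S : Finset G) (f : G → ℂ) : ℝ :=
  (dirSum p S f + ‖f 1‖ ^ p) ^ (1/p)

/-- The norm on `D_p(G)/ℂ`: `(∑_{s,g}|f(gs⁻¹)−f(g)|^p)^{1/p}`. -/
noncomputable def qNorm (p : ℝ) (S : Finset G) (f : G → ℂ) : ℝ :=
  dirSum p S f ^ (1/p)

/-- Boundedness of a function. -/
def BddFun (f : G → ℂ) : Prop := ∃ M : ℝ, ∀ g, ‖f g‖ ≤ M

/-- The sup norm. -/
noncomputable def supNorm (f : G → ℂ) : ℝ := ⨆ g, ‖f g‖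

/-- The `BD_p`-norm `‖f‖_∞ + (∑_{s,g}|f(gs⁻¹)−f(g)|^p)^{1/p}`. -/
noncomputable def bdpNorm (p : ℝ) (S : Finset G) (f : G → ℂ) : ℝ :=
  supNorm f + dirSum p S f ^ (1/p)

/-- Membership in `BD_p(G)`: bounded and finite Dirichlet `p`-sum. -/
def MemBDp (p : ℝ) (S : Finset G) (f : G → ℂ) : Prop := BddFun f ∧ MemDp p S f

/-- Membership in `ℓ^p(G)`. -/
def MemLp' (p : ℝ) (f : G → ℂ) : Prop := Summable fun g => ‖f g‖ ^ p

/-- `f` lies in the `D_p`-closure of the finitely supported functions `ℂG`. -/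
def InClosCG (p : ℝ) (S : Finset G) (f : G → ℂ) : Prop :=
  MemDp p S f ∧ ∀ ε : ℝ, 0 < ε →
    ∃ h : G → ℂ, (Function.support h).Finite ∧ dpNorm p S (f - h) < ε

/-- `f` is a bounded function in the `D_p`-closure of `ℂG`. -/
def InBClosCG (p : ℝ) (S : Finset G) (f : G → ℂ) : Prop := BddFun f ∧ InClosCG p S f

/-- `f` lies in the `D_p`-closure of `ℓ^p(G)`. -/
def InClosLp (p : ℝ) (S : Finset G) (f : G → ℂ) : Prop :=
  MemDp p S f ∧ ∀ ε : ℝ, 0 < ε →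
    ∃ h : G → ℂ, MemLp' p h ∧ dpNorm p S (f - h) < ε

/-- `f` is a bounded function in the `D_p`-closure of `ℓ^p(G)`. -/
def InBClosLp (p : ℝ) (S : Finset G) (f : G → ℂ) : Prop := BddFun f ∧ InClosLp p S f

/-- `f` lies in the `D_p`-closure of `ℓ^p(G) ⊕ ℂ`. -/
def InClosLpC (p : ℝ) (S : Finset G) (f : G → ℂ) : Prop :=
  MemDp p S f ∧ ∀ ε : ℝ, 0 < ε →
    ∃ (h : G → ℂ) (c : ℂ), MemLp' p h ∧ dpNorm p S (f - h - Function.const G c) < ε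

/-- A character (nonzero multiplicative linear functional) on `BD_p(G)`. -/
structure BDpChar (p : ℝ) (S : Finset G) where
  toFun : {f : G → ℂ // MemBDp p S f} → ℂ
  map_add : ∀ (f h : {f : G → ℂ // MemBDp p S f}) (hm : MemBDp p S (f.1 + h.1)),
    toFun ⟨f.1 + h.1, hm⟩ = toFun f + toFun h
  map_mul : ∀ (f h : {f : G → ℂ // MemBDp p S f}) (hm : MemBDp p S (f.1 * h.1)),
    toFun ⟨f.1 * h.1, hm⟩ = toFun f * toFun h
  map_smul : ∀ (c : ℂ) (f : {f : G → ℂ // MemBDp p S f}) (hm : MemBDp p S (c • f.1)),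
    toFun ⟨c • f.1, hm⟩ = c * toFun f
  map_one : ∀ hm : MemBDp p S (1 : G → ℂ), toFun ⟨1, hm⟩ = 1

/-- The weak-* topology on the spectrum `Sp(BD_p(G))`. -/
noncomputable instance (p : ℝ) (S : Finset G) : TopologicalSpace (BDpChar p S) :=
  TopologicalSpace.induced BDpChar.toFun Pi.topologicalSpace

/-- The evaluation embedding `i : G → Sp(BD_p(G))`, `(i g)(f) = f(g)`. -/
def evalChar (p : ℝ) (S : Finset G) (g : G) : BDpChar p S where
  toFun := fun f => f.1 g
  map_add := fun _ _ _ => rfl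
  map_mul := fun _ _ _ => rfl
  map_smul := fun _ _ _ => rfl
  map_one := fun _ => rfl

/-- The `p`-Laplacian `Δ_p f(g) = ∑_{s∈S} |f(gs⁻¹)−f(g)|^{p−2}(f(gs⁻¹)−f(g))`. -/
noncomputable def pLap (p : ℝ) (S : Finset G) (f : G → ℂ) (g : G) : ℂ :=
  ∑ s ∈ S, ((‖f (g * s⁻¹) - f g‖ ^ (p - 2) : ℝ) : ℂ) * (f (g * s⁻¹) - f g)

/-- `f` is `p`-harmonic: `f ∈ D_p(G)` and `Δ_p f ≡ 0`. -/
def PHarmonic (p : ℝ) (S : Finset G) (f : G → ℂ) : Prop :=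
  MemDp p S f ∧ ∀ g, pLap p S f g = 0

/-- The `p`-harmonic boundary `∂_p(G) ⊆ Sp(BD_p(G)) \ G`. -/
def pBoundary (p : ℝ) (S : Finset G) : Set (BDpChar p S) :=
  {x | (∀ g : G, x ≠ evalChar p S g) ∧
    ∀ (f : G → ℂ) (hf : MemBDp p S f), InBClosCG p S f → x.toFun ⟨f, hf⟩ = 0}

/-- The word metric on `G` with respect to the generating set `S`. -/
noncomputable def wordDist (S : Finset G) (x y : G) : ℕ :=
  sInf {n | ∃ l : List G, (∀ a ∈ l, a ∈ S) ∧ l.length = n ∧ x⁻¹ * y = l.prod}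

/-- The word length `|g| = d(e,g)`. -/
noncomputable def wordLen (S : Finset G) (g : G) : ℕ := wordDist S 1 g

/-- Right translation `f_x(g) = f(gx⁻¹)`. -/
def translateFun (f : G → ℂ) (x : G) : G → ℂ := fun g => f (g * x⁻¹)

/-- `φ : G → H` is a rough isometry with constants `a, b, c` for the word metrics. -/
def RoughIsom {G H : Type*} [Group G] [Group H] (S : Finset G) (T : Finset H)
    (φ : G → H) (a b c : ℝ) : Prop :=
  1 ≤ a ∧ 0 ≤ b ∧ 0 < c ∧
  (∀ x y : G, (1/a) * (wordDist S x y : ℝ) - b ≤ (wordDist T (φ x) (φ y) : ℝ) ∧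
    (wordDist T (φ x) (φ y) : ℝ) ≤ a * (wordDist S x y : ℝ) + b) ∧
  ∀ h : H, ∃ x : G, (wordDist T (φ x) h : ℝ) < c

/-- `S` is a symmetric generating set of `G`. -/
def SymmGen (S : Finset G) : Prop :=
  (∀ s ∈ S, s⁻¹ ∈ S) ∧ Subgroup.closure (S : Set G) = ⊤

end PHB

/-!
Recording, for each `f`, all its differences `f (g * s⁻¹) - f g` together with `f 1` gives a
linear map `f ↦ dpEmbed S f` into functions on `(S × G) ⊕ Unit`, and `dpNorm` is exactly the
`ℓ^p` norm of that vector. Since `S` generates `G`, a function is recovered from its differences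
and its value at `1`, so the map is injective; the same propagation along words in `S` shows that
a pointwise limit of vectors `dpEmbed S (u n)` is again of the form `dpEmbed S f`. Hence `D_p(G)`
is isometric to a closed subspace of the Banach space `ℓ^p`.
-/

namespace PHB

variable {G : Type*} [Group G]

theorem mem_addSubgroup_of_sub_mem {S : Set G} (hS : Subgroup.closure S = ⊤) {M : Type*}
    [AddGroup M] (A : AddSubgroup M) {V : G → M} (h1 : V 1 ∈ A)
    (hV : ∀ s ∈ S, ∀ g, V (g * s⁻¹) - V g ∈ A) (g : G) : V g ∈ A := by
  let H : Subgroup G :=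
    { carrier := {x | ∀ g, V (g * x) - V g ∈ A}
      one_mem' := fun g => by simp
      mul_mem' := fun {a b} ha hb g => by
        simpa [← mul_assoc] using A.add_mem (hb (g * a)) (ha g)
      inv_mem' := fun {a} ha g => by simpa using A.neg_mem (ha (g * a⁻¹)) }
  have hSH : S ⊆ H := fun s hs => by simpa using H.inv_mem (hV s hs)
  have hg : g ∈ H := (Subgroup.closure_le H).2 hSH (hS ▸ Subgroup.mem_top g)
  simpa using A.add_mem (hg 1) h1

def convergentSeqs (M : Type*) [AddGroup M] [TopologicalSpace M] [IsTopologicalAddGroup M] :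
    AddSubgroup (ℕ → M) where
  carrier := {x | ∃ l, Tendsto x atTop (𝓝 l)}
  zero_mem' := ⟨0, tendsto_const_nhds⟩
  add_mem' := fun ⟨a, ha⟩ ⟨b, hb⟩ => ⟨a + b, ha.add hb⟩
  neg_mem' := fun ⟨a, ha⟩ => ⟨-a, ha.neg⟩

def dpEmbed (S : Finset G) : (G → ℂ) →ₗ[ℂ] ((S × G) ⊕ Unit → ℂ) where
  toFun f := Sum.elim (fun x => f (x.2 * (x.1 : G)⁻¹) - f x.2) fun _ => f 1
  map_add' f h := by ext (x | _) <;> simp; ring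
  map_smul' c f := by ext (x | _) <;> simp; ring

variable {S : Finset G}

@[simp]
theorem dpEmbed_inl (f : G → ℂ) (x : S × G) :
    dpEmbed S f (.inl x) = f (x.2 * (x.1 : G)⁻¹) - f x.2 := rfl

@[simp]
theorem dpEmbed_inr (f : G → ℂ) (x : Unit) : dpEmbed S f (.inr x) = f 1 := rfl

theorem dpEmbed_injective (hS : Subgroup.closure (S : Set G) = ⊤) :
    Function.Injective (dpEmbed S) := by
  refine (injective_iff_map_eq_zero _).2 fun f hf => funext fun g => ?_
  have hf' := congrFun hf
  refine AddSubgroup.mem_bot.1 (mem_addSubgroup_of_sub_mem hS ⊥ ?_ (fun s hs g => ?_) g)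
  · simpa using hf' (.inr ())
  · simpa using hf' (.inl (⟨s, hs⟩, g))

theorem exists_dpEmbed_eq_of_tendsto (hS : Subgroup.closure (S : Set G) = ⊤)
    {u : ℕ → G → ℂ} {L : (S × G) ⊕ Unit → ℂ}
    (hu : Tendsto (fun n => dpEmbed S (u n)) atTop (𝓝 L)) : ∃ f, dpEmbed S f = L := by
  have hlim := tendsto_pi_nhds.1 hu
  have hconv : ∀ g, (fun n => u n g) ∈ convergentSeqs ℂ :=
    mem_addSubgroup_of_sub_mem hS _ ⟨_, hlim (.inr ())⟩ fun s hs g =>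
      ⟨_, hlim (.inl (⟨s, hs⟩, g))⟩
  choose f hf using hconv
  refine ⟨f, funext fun i => ?_⟩
  rcases i with x | _
  · exact tendsto_nhds_unique ((hf _).sub (hf _)) (hlim _)
  · exact tendsto_nhds_unique (hf 1) (hlim _)

variable {p : ℝ} {f h : G → ℂ}

theorem hasSum_norm_rpow_dpEmbed (hf : MemDp p S f) :
    HasSum (fun i => ‖dpEmbed S f i‖ ^ p) (dirSum p S f + ‖f 1‖ ^ p) := by
  have hsum : Summable fun x : S × G => dpTerm p f x.1 x.2 :=
    (summable_prod_of_nonneg fun _ => Real.rpow_nonneg (norm_nonneg _) _).2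
      ⟨fun s => hf s s.2, .of_finite⟩
  have hdir : HasSum (fun x : S × G => dpTerm p f x.1 x.2) (dirSum p S f) := by
    convert hsum.hasSum using 1
    rw [hsum.tsum_prod' fun s => hf s s.2, tsum_fintype, dirSum]
    exact (Finset.sum_coe_sort S fun s => ∑' g, dpTerm p f s g).symm
  exact hdir.sum (hasSum_single () fun _ h => (h rfl).elim)

theorem memDp_iff_memℓp (hp : 0 < p) :
    MemDp p S f ↔ Memℓp (dpEmbed S f) (ENNReal.ofReal p) := by
  rw [memℓp_gen_iff (by rwa [ENNReal.toReal_ofReal hp.le]), ENNReal.toReal_ofReal hp.le]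
  refine ⟨fun hf => (hasSum_norm_rpow_dpEmbed hf).summable, fun hf s hs => ?_⟩
  have hinl : Summable fun x : S × G => dpTerm p f x.1 x.2 := by
    simpa [Function.comp_def, dpTerm] using hf.comp_injective Sum.inl_injective
  exact ((summable_prod_of_nonneg fun _ => Real.rpow_nonneg (norm_nonneg _) _).1 hinl).1 ⟨s, hs⟩

theorem MemDp.add (hp : 0 < p) (hf : MemDp p S f) (hh : MemDp p S h) : MemDp p S (f + h) := by
  rw [memDp_iff_memℓp hp, map_add] at *
  exact hf.add hh

theorem MemDp.sub (hp : 0 < p) (hf : MemDp p S f) (hh : MemDp p S h) : MemDp p S (f - h) := by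
  rw [memDp_iff_memℓp hp, map_sub] at *
  exact hf.sub hh

theorem MemDp.const_smul (hp : 0 < p) (c : ℂ) (hf : MemDp p S f) : MemDp p S (c • f) := by
  rw [memDp_iff_memℓp hp, map_smul] at *
  exact hf.const_smul c

def toLp (hp : 0 < p) (hf : MemDp p S f) : lp (fun _ : (S × G) ⊕ Unit => ℂ) (ENNReal.ofReal p) :=
  ⟨dpEmbed S f, (memDp_iff_memℓp hp).1 hf⟩

theorem dpNorm_eq_norm_toLp (hp : 0 < p) (hf : MemDp p S f) : dpNorm p S f = ‖toLp hp hf‖ := by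
  rw [lp.norm_eq_tsum_rpow (by rwa [ENNReal.toReal_ofReal hp.le]), ENNReal.toReal_ofReal hp.le, dpNorm,
    ← (hasSum_norm_rpow_dpEmbed hf).tsum_eq]
  rfl

theorem toLp_add (hp : 0 < p) (hf : MemDp p S f) (hh : MemDp p S h) :
    toLp hp (hf.add hp hh) = toLp hp hf + toLp hp hh :=
  Subtype.ext (map_add _ _ _)

theorem toLp_sub (hp : 0 < p) (hf : MemDp p S f) (hh : MemDp p S h) :
    toLp hp (hf.sub hp hh) = toLp hp hf - toLp hp hh :=
  Subtype.ext (map_sub _ _ _)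

theorem toLp_const_smul (hp : 0 < p) (c : ℂ) (hf : MemDp p S f) :
    toLp hp (hf.const_smul hp c) = c • toLp hp hf :=
  Subtype.ext (map_smul _ _ _)

theorem dpNorm_eq_zero_iff (hS : Subgroup.closure (S : Set G) = ⊤) (hp : 0 < p)
    (hf : MemDp p S f) : dpNorm p S f = 0 ↔ f = 0 := by
  rw [dpNorm_eq_norm_toLp hp hf, lp.norm_eq_zero_iff, ← (dpEmbed S).map_eq_zero_iff
    (dpEmbed_injective hS), ← Subtype.coe_inj]
  rfl

theorem dpNorm_const_smul (hp : 0 < p) (c : ℂ) (hf : MemDp p S f) :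
    dpNorm p S (c • f) = ‖c‖ * dpNorm p S f := by
  rw [dpNorm_eq_norm_toLp hp (hf.const_smul hp c), toLp_const_smul,
    lp.norm_const_smul (ENNReal.ofReal_pos.2 hp).ne', dpNorm_eq_norm_toLp hp hf]

theorem dpNorm_add_le (hp : 1 ≤ p) (hf : MemDp p S f) (hh : MemDp p S h) :
    dpNorm p S (f + h) ≤ dpNorm p S f + dpNorm p S h := by
  have hp0 : 0 < p := by linarith
  have : Fact (1 ≤ ENNReal.ofReal p) := ⟨ENNReal.one_le_ofReal.2 hp⟩
  rw [dpNorm_eq_norm_toLp hp0 (hf.add hp0 hh), toLp_add, dpNorm_eq_norm_toLp hp0 hf,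
    dpNorm_eq_norm_toLp hp0 hh]
  exact norm_add_le _ _

theorem exists_tendsto_dpNorm_of_cauchy (hS : Subgroup.closure (S : Set G) = ⊤) (hp : 1 ≤ p)
    {u : ℕ → G → ℂ} (hu : ∀ n, MemDp p S (u n))
    (hcau : ∀ ε : ℝ, 0 < ε → ∃ N : ℕ, ∀ m ≥ N, ∀ n ≥ N, dpNorm p S (u m - u n) < ε) :
    ∃ f, MemDp p S f ∧ Tendsto (fun n => dpNorm p S (u n - f)) atTop (𝓝 0) := by
  have hp0 : 0 < p := by linarith
  have : Fact (1 ≤ ENNReal.ofReal p) := ⟨ENNReal.one_le_ofReal.2 hp⟩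
  have hdist : ∀ m n, dist (toLp hp0 (hu m)) (toLp hp0 (hu n)) = dpNorm p S (u m - u n) :=
    fun m n => by rw [dist_eq_norm, ← toLp_sub, ← dpNorm_eq_norm_toLp]
  have hcauchy : CauchySeq fun n => toLp hp0 (hu n) :=
    Metric.cauchySeq_iff.2 fun ε hε => by simpa only [hdist] using hcau ε hε
  obtain ⟨L, hL⟩ := cauchySeq_tendsto_of_complete hcauchy
  obtain ⟨f, hfL⟩ := exists_dpEmbed_eq_of_tendsto hS
    ((lp.uniformContinuous_coe.continuous.tendsto L).comp hL)
  have hf : MemDp p S f := (memDp_iff_memℓp hp0).2 (hfL ▸ L.2)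
  have hLf : L = toLp hp0 hf := Subtype.ext hfL.symm
  refine ⟨f, hf, ?_⟩
  simpa only [hLf, ← toLp_sub, ← dpNorm_eq_norm_toLp] using
    tendsto_iff_norm_sub_tendsto_zero.1 hL

end PHB

theorem Dp_is_Banach_general {G : Type*} [Group G] (S : Finset G)
    (hS : PHB.SymmGen S) (p : ℝ) (hp : 1 ≤ p) :
    (∀ f : G → ℂ, PHB.MemDp p S f → (PHB.dpNorm p S f = 0 ↔ f = 0)) ∧
    (∀ (c : ℂ) (f : G → ℂ), PHB.MemDp p S f →
      PHB.dpNorm p S (c • f) = ‖c‖ * PHB.dpNorm p S f) ∧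
    (∀ f h : G → ℂ, PHB.MemDp p S f → PHB.MemDp p S h →
      PHB.dpNorm p S (f + h) ≤ PHB.dpNorm p S f + PHB.dpNorm p S h) ∧
    (∀ u : ℕ → (G → ℂ), (∀ n, PHB.MemDp p S (u n)) →
      (∀ ε : ℝ, 0 < ε → ∃ N : ℕ, ∀ m ≥ N, ∀ n ≥ N, PHB.dpNorm p S (u m - u n) < ε) →
      ∃ f : G → ℂ, PHB.MemDp p S f ∧
        Filter.Tendsto (fun n => PHB.dpNorm p S (u n - f)) Filter.atTop (nhds 0)) := by
  have hp0 : 0 < p := by linarith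
  exact ⟨fun f => PHB.dpNorm_eq_zero_iff hS.2 hp0, fun c f => PHB.dpNorm_const_smul hp0 c,
    fun f h => PHB.dpNorm_add_le hp, fun u => PHB.exists_tendsto_dpNorm_of_cauchy hS.2 hp⟩

/-- `D_p(G)` with the norm `(∑_{s,g}|f(gs⁻¹)−f(g)|^p + |f(e)|^p)^{1/p}`
is a Banach space: the norm axioms hold and every Cauchy sequence converges. -/
theorem Dp_is_Banach {G : Type*} [Group G] [Infinite G] (S : Finset G)
    (hS : PHB.SymmGen S) (p : ℝ) (hp : 1 ≤ p) :
    (∀ f : G → ℂ, PHB.MemDp p S f → (PHB.dpNorm p S f = 0 ↔ f = 0)) ∧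
    (∀ (c : ℂ) (f : G → ℂ), PHB.MemDp p S f →
      PHB.dpNorm p S (c • f) = ‖c‖ * PHB.dpNorm p S f) ∧
    (∀ f h : G → ℂ, PHB.MemDp p S f → PHB.MemDp p S h →
      PHB.dpNorm p S (f + h) ≤ PHB.dpNorm p S f + PHB.dpNorm p S h) ∧
    (∀ u : ℕ → (G → ℂ), (∀ n, PHB.MemDp p S (u n)) →
      (∀ ε : ℝ, 0 < ε → ∃ N : ℕ, ∀ m ≥ N, ∀ n ≥ N, PHB.dpNorm p S (u m - u n) < ε) →
      ∃ f : G → ℂ, PHB.MemDp p S f ∧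
        Filter.Tendsto (fun n => PHB.dpNorm p S (u n - f)) Filter.atTop (nhds 0)) :=
  Dp_is_Banach_general S hS p hp
end

section
/- The set BD_p(G) of bounded functions in D_p(G) is a commutative Banach algebra under pointwise operations with norm ‖f‖_{BD_p} = ‖f‖_∞ + (∑_{s∈S} ∑_{g∈G} |f(gs⁻¹) − f(g)|^p)^{1/p}. -/
open Filter Topology

section BDpAux
namespace BDpAux
open PHB Filter Topology

variable {G : Type*} [Group G]

/-- The combined difference family indexed by `S × G`. -/
noncomputable def D (S : Finset G) (f : G → ℂ) : {x // x ∈ S} × G → ℂ :=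
  fun i => f (i.2 * (i.1 : G)⁻¹) - f i.2

lemma D_add (S : Finset G) (f h : G → ℂ) : D S (f + h) = D S f + D S h := by
  funext i; simp only [D, Pi.add_apply]; ring

lemma D_sub (S : Finset G) (f h : G → ℂ) : D S (f - h) = D S f - D S h := by
  funext i; simp only [D, Pi.sub_apply]; ring

lemma D_smul (S : Finset G) (c : ℂ) (f : G → ℂ) : D S (c • f) = c • D S f := by
  funext i; simp only [D, Pi.smul_apply, smul_eq_mul]; ring

lemma D_mul (S : Finset G) (f h : G → ℂ) :
    D S (f * h) = (fun i => f (i.2 * (i.1 : G)⁻¹) * D S h i)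
      + (fun i => h i.2 * D S f i) := by
  funext i; simp only [D, Pi.mul_apply, Pi.add_apply]; ring

/-! ### sup norm facts -/

lemma bddAbove_range {f : G → ℂ} (hf : BddFun f) :
    BddAbove (Set.range fun g => ‖f g‖) := by
  obtain ⟨M, hM⟩ := hf
  exact ⟨M, by rintro x ⟨g, rfl⟩; exact hM g⟩

lemma le_supNorm {f : G → ℂ} (hf : BddFun f) (g : G) : ‖f g‖ ≤ supNorm f :=
  le_ciSup (bddAbove_range hf) g

lemma supNorm_nonneg {f : G → ℂ} (hf : BddFun f) : 0 ≤ supNorm f :=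
  (norm_nonneg (f 1)).trans (le_supNorm hf 1)

lemma bddFun_add {f h : G → ℂ} (hf : BddFun f) (hh : BddFun h) : BddFun (f + h) := by
  obtain ⟨M, hM⟩ := hf; obtain ⟨M', hM'⟩ := hh
  exact ⟨M + M', fun g => (norm_add_le _ _).trans (add_le_add (hM g) (hM' g))⟩

lemma bddFun_neg {f : G → ℂ} (hf : BddFun f) : BddFun (-f) := by
  obtain ⟨M, hM⟩ := hf
  exact ⟨M, fun g => by simpa using hM g⟩

lemma bddFun_sub {f h : G → ℂ} (hf : BddFun f) (hh : BddFun h) : BddFun (f - h) := by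
  simpa [sub_eq_add_neg] using bddFun_add hf (bddFun_neg hh)

lemma bddFun_smul {f : G → ℂ} (c : ℂ) (hf : BddFun f) : BddFun (c • f) := by
  obtain ⟨M, hM⟩ := hf
  exact ⟨‖c‖ * M, fun g => by
    simp only [Pi.smul_apply, smul_eq_mul, norm_mul]
    exact mul_le_mul_of_nonneg_left (hM g) (norm_nonneg c)⟩

lemma bddFun_mul {f h : G → ℂ} (hf : BddFun f) (hh : BddFun h) : BddFun (f * h) := by
  obtain ⟨M, hM⟩ := hf; obtain ⟨M', hM'⟩ := hh
  have hM0 : 0 ≤ M := (norm_nonneg (f 1)).trans (hM 1)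
  exact ⟨M * M', fun g => by
    simp only [Pi.mul_apply, norm_mul]
    exact mul_le_mul (hM g) (hM' g) (norm_nonneg _) hM0⟩

lemma supNorm_add_le {f h : G → ℂ} (hf : BddFun f) (hh : BddFun h) :
    supNorm (f + h) ≤ supNorm f + supNorm h :=
  ciSup_le fun g => (norm_add_le (f g) (h g)).trans
    (add_le_add (le_supNorm hf g) (le_supNorm hh g))

lemma supNorm_mul_le {f h : G → ℂ} (hf : BddFun f) (hh : BddFun h) :
    supNorm (f * h) ≤ supNorm f * supNorm h :=
  ciSup_le fun g => by
    have : ‖f g * h g‖ = ‖f g‖ * ‖h g‖ := norm_mul _ _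
    rw [show (f * h) g = f g * h g from rfl, this]
    exact mul_le_mul (le_supNorm hf g) (le_supNorm hh g) (norm_nonneg _)
      (supNorm_nonneg hf)

lemma supNorm_smul (c : ℂ) (f : G → ℂ) : supNorm (c • f) = ‖c‖ * supNorm f := by
  unfold supNorm
  rw [Real.mul_iSup_of_nonneg (norm_nonneg c)]
  congr 1
  funext g
  simp [norm_smul]

lemma supNorm_zero : supNorm (0 : G → ℂ) = 0 := by
  unfold supNorm
  simp

/-! ### Dirichlet sum facts -/

lemma dirSum_nonneg (p : ℝ) (S : Finset G) (f : G → ℂ) : 0 ≤ dirSum p S f :=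
  Finset.sum_nonneg fun _ _ => tsum_nonneg fun _ => Real.rpow_nonneg (norm_nonneg _) _

lemma qpart_nonneg (p : ℝ) (S : Finset G) (f : G → ℂ) : 0 ≤ dirSum p S f ^ (1/p) :=
  Real.rpow_nonneg (dirSum_nonneg p S f) _

lemma memDp_iff_summable {p : ℝ} (hp : 0 < p) (S : Finset G) (f : G → ℂ) :
    MemDp p S f ↔ Summable (fun i => ‖D S f i‖ ^ p) := by
  rw [summable_prod_of_nonneg (fun i => Real.rpow_nonneg (norm_nonneg _) p)]
  constructor
  · intro hf
    exact ⟨fun s => hf s s.2, Summable.of_finite⟩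
  · intro hf s hs
    exact hf.1 ⟨s, hs⟩

lemma dirSum_eq_tsum {p : ℝ} (hp : 0 < p) (S : Finset G) (f : G → ℂ) (hf : MemDp p S f) :
    dirSum p S f = ∑' i, ‖D S f i‖ ^ p := by
  have hsum := (memDp_iff_summable hp S f).1 hf
  calc dirSum p S f = ∑ s ∈ S, ∑' g, dpTerm p f s g := rfl
    _ = ∑' s : {x // x ∈ S}, ∑' g, dpTerm p f (s : G) g :=
        (Finset.tsum_subtype S fun t => ∑' g, dpTerm p f t g).symm
    _ = ∑' i : {x // x ∈ S} × G, ‖D S f i‖ ^ p :=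
        (Summable.tsum_prod' hsum fun s => hf s s.2).symm

lemma memℓp_iff_memDp {p : ℝ} (hp : 1 ≤ p) (S : Finset G) (f : G → ℂ) :
    Memℓp (D S f) (ENNReal.ofReal p) ↔ MemDp p S f := by
  have h0 : (0:ℝ) < p := one_pos.trans_le hp
  have key : (ENNReal.ofReal p).toReal = p := ENNReal.toReal_ofReal h0.le
  rw [memℓp_gen_iff (by rw [key]; exact h0), memDp_iff_summable h0]
  simp only [key]

lemma memDp_add {p : ℝ} (hp : 1 ≤ p) {S : Finset G} {f h : G → ℂ}
    (hf : MemDp p S f) (hh : MemDp p S h) : MemDp p S (f + h) := by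
  have := ((memℓp_iff_memDp hp S f).2 hf).add ((memℓp_iff_memDp hp S h).2 hh)
  rw [← D_add] at this
  exact (memℓp_iff_memDp hp S (f + h)).1 this

lemma memDp_sub {p : ℝ} (hp : 1 ≤ p) {S : Finset G} {f h : G → ℂ}
    (hf : MemDp p S f) (hh : MemDp p S h) : MemDp p S (f - h) := by
  have := ((memℓp_iff_memDp hp S f).2 hf).sub ((memℓp_iff_memDp hp S h).2 hh)
  rw [← D_sub] at this
  exact (memℓp_iff_memDp hp S (f - h)).1 this

lemma memDp_smul {p : ℝ} (hp : 1 ≤ p) {S : Finset G} (c : ℂ) {f : G → ℂ}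
    (hf : MemDp p S f) : MemDp p S (c • f) := by
  have := ((memℓp_iff_memDp hp S f).2 hf).const_smul c
  rw [← D_smul] at this
  exact (memℓp_iff_memDp hp S (c • f)).1 this

lemma summable_dom {p : ℝ} (hp : 0 < p) {ι : Type*} {x y : ι → ℂ} {M : ℝ} (hM : 0 ≤ M)
    (hy : Summable fun i => ‖y i‖ ^ p) (hxy : ∀ i, ‖x i‖ ≤ M * ‖y i‖) :
    Summable (fun i => ‖x i‖ ^ p) ∧ ∑' i, ‖x i‖ ^ p ≤ M ^ p * ∑' i, ‖y i‖ ^ p := by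
  have hbd : ∀ i, ‖x i‖ ^ p ≤ M ^ p * ‖y i‖ ^ p := fun i => by
    rw [← Real.mul_rpow hM (norm_nonneg _)]
    exact Real.rpow_le_rpow (norm_nonneg _) (hxy i) hp.le
  have hs : Summable fun i => M ^ p * ‖y i‖ ^ p := hy.mul_left _
  have hx : Summable fun i => ‖x i‖ ^ p :=
    Summable.of_nonneg_of_le (fun i => Real.rpow_nonneg (norm_nonneg _) _) hbd hs
  refine ⟨hx, le_trans (Summable.tsum_le_tsum hbd hx hs) ?_⟩
  rw [tsum_mul_left]

lemma memDp_mul {p : ℝ} (hp : 1 ≤ p) {S : Finset G} {f h : G → ℂ}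
    (hf : MemBDp p S f) (hh : MemBDp p S h) : MemDp p S (f * h) := by
  have h0 : (0:ℝ) < p := one_pos.trans_le hp
  have key : (ENNReal.ofReal p).toReal = p := ENNReal.toReal_ofReal h0.le
  obtain ⟨Mf, hMf⟩ := hf.1
  obtain ⟨Mh, hMh⟩ := hh.1
  have hsf := (memDp_iff_summable h0 S f).1 hf.2
  have hsh := (memDp_iff_summable h0 S h).1 hh.2
  have hA : Summable fun i : {x // x ∈ S} × G => ‖f (i.2 * (i.1 : G)⁻¹) * D S h i‖ ^ p := by
    refine (summable_dom h0 ((norm_nonneg (f 1)).trans (hMf 1)) hsh fun i => ?_).1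
    rw [norm_mul]
    exact mul_le_mul_of_nonneg_right (hMf _) (norm_nonneg _)
  have hB : Summable fun i : {x // x ∈ S} × G => ‖h i.2 * D S f i‖ ^ p := by
    refine (summable_dom h0 ((norm_nonneg (h 1)).trans (hMh 1)) hsf fun i => ?_).1
    rw [norm_mul]
    exact mul_le_mul_of_nonneg_right (hMh _) (norm_nonneg _)
  have hA' : Memℓp (fun i : {x // x ∈ S} × G => f (i.2 * (i.1 : G)⁻¹) * D S h i)
      (ENNReal.ofReal p) := memℓp_gen (by simpa only [key] using hA)
  have hB' : Memℓp (fun i : {x // x ∈ S} × G => h i.2 * D S f i)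
      (ENNReal.ofReal p) := memℓp_gen (by simpa only [key] using hB)
  have := hA'.add hB'
  rw [← D_mul] at this
  exact (memℓp_iff_memDp hp S (f * h)).1 this

lemma dirSum_smul {p : ℝ} (hp : 0 < p) (S : Finset G) (c : ℂ) (f : G → ℂ) :
    dirSum p S (c • f) = ‖c‖ ^ p * dirSum p S f := by
  unfold dirSum
  rw [Finset.mul_sum]
  refine Finset.sum_congr rfl fun s _ => ?_
  rw [← tsum_mul_left]
  congr 1
  funext g
  unfold dpTerm
  simp only [Pi.smul_apply, smul_eq_mul]
  rw [show c * f (g * s⁻¹) - c * f g = c * (f (g * s⁻¹) - f g) by ring, norm_mul,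
    Real.mul_rpow (norm_nonneg _) (norm_nonneg _)]

lemma dirSum_one {p : ℝ} (hp : 0 < p) (S : Finset G) : dirSum p S (1 : G → ℂ) = 0 := by
  unfold dirSum
  refine Finset.sum_eq_zero fun s _ => ?_
  have : dpTerm p (1 : G → ℂ) s = fun _ => (0:ℝ) := by
    funext g
    simp [dpTerm, Real.zero_rpow hp.ne']
  rw [this, tsum_zero]

lemma dirSum_zero {p : ℝ} (hp : 0 < p) (S : Finset G) : dirSum p S (0 : G → ℂ) = 0 := by
  unfold dirSum
  refine Finset.sum_eq_zero fun s _ => ?_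
  have : dpTerm p (0 : G → ℂ) s = fun _ => (0:ℝ) := by
    funext g
    simp [dpTerm, Real.zero_rpow hp.ne']
  rw [this, tsum_zero]

/-- Minkowski inequality for `ℓ^p` tsums, via the `lp` space machinery. -/
lemma tsum_rpow_add_le {p : ℝ} (hp : 1 ≤ p) {ι : Type*} {x y : ι → ℂ}
    (hx : Summable fun i => ‖x i‖ ^ p) (hy : Summable fun i => ‖y i‖ ^ p) :
    (∑' i, ‖x i + y i‖ ^ p) ^ (1/p)
      ≤ (∑' i, ‖x i‖ ^ p) ^ (1/p) + (∑' i, ‖y i‖ ^ p) ^ (1/p) := by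
  have h0 : (0:ℝ) < p := one_pos.trans_le hp
  have key : (ENNReal.ofReal p).toReal = p := ENNReal.toReal_ofReal h0.le
  have hptr : 0 < (ENNReal.ofReal p).toReal := by rw [key]; exact h0
  haveI : Fact (1 ≤ ENNReal.ofReal p) := ⟨ENNReal.one_le_ofReal.mpr hp⟩
  let X : lp (fun _ : ι => ℂ) (ENNReal.ofReal p) := ⟨x, memℓp_gen (by simpa only [key] using hx)⟩
  let Y : lp (fun _ : ι => ℂ) (ENNReal.ofReal p) := ⟨y, memℓp_gen (by simpa only [key] using hy)⟩
  have hXY := norm_add_le X Y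
  rw [lp.norm_eq_tsum_rpow hptr, lp.norm_eq_tsum_rpow hptr, lp.norm_eq_tsum_rpow hptr] at hXY
  simp only [key] at hXY
  have hadd : ∀ i, (X + Y) i = x i + y i := fun i => by
    rw [lp.coeFn_add]; rfl
  simp only [hadd] at hXY
  exact hXY

/-- The `lp` norm of any representative of `D S f` equals `dirSum ^ (1/p)`. -/
lemma norm_lp_eq {p : ℝ} (hp : 1 ≤ p) (S : Finset G) (f : G → ℂ) (hf : MemDp p S f)
    (z : lp (fun _ : {x // x ∈ S} × G => ℂ) (ENNReal.ofReal p)) (hz : ∀ i, z i = D S f i) :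
    ‖z‖ = dirSum p S f ^ (1/p) := by
  have h0 : (0:ℝ) < p := one_pos.trans_le hp
  have key : (ENNReal.ofReal p).toReal = p := ENNReal.toReal_ofReal h0.le
  have hptr : 0 < (ENNReal.ofReal p).toReal := by rw [key]; exact h0
  rw [lp.norm_eq_tsum_rpow hptr, dirSum_eq_tsum h0 S f hf]
  simp only [key, hz]

lemma q_add_le {p : ℝ} (hp : 1 ≤ p) {S : Finset G} {f h : G → ℂ}
    (hf : MemDp p S f) (hh : MemDp p S h) :
    dirSum p S (f + h) ^ (1/p) ≤ dirSum p S f ^ (1/p) + dirSum p S h ^ (1/p) := by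
  have h0 : (0:ℝ) < p := one_pos.trans_le hp
  have hsf := (memDp_iff_summable h0 S f).1 hf
  have hsh := (memDp_iff_summable h0 S h).1 hh
  rw [dirSum_eq_tsum h0 S _ (memDp_add hp hf hh), dirSum_eq_tsum h0 S f hf,
    dirSum_eq_tsum h0 S h hh]
  have := tsum_rpow_add_le hp hsf hsh
  simpa only [D_add, Pi.add_apply] using this

lemma tsum_rpow_dom_le {p : ℝ} (hp : 1 ≤ p) {ι : Type*} {x y : ι → ℂ} {M : ℝ} (hM : 0 ≤ M)
    (hy : Summable fun i => ‖y i‖ ^ p) (hxy : ∀ i, ‖x i‖ ≤ M * ‖y i‖) :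
    (∑' i, ‖x i‖ ^ p) ^ (1/p) ≤ M * (∑' i, ‖y i‖ ^ p) ^ (1/p) := by
  have h0 : (0:ℝ) < p := one_pos.trans_le hp
  have hdom := summable_dom h0 hM hy hxy
  have h1 : (∑' i, ‖x i‖ ^ p) ^ (1/p) ≤ (M ^ p * ∑' i, ‖y i‖ ^ p) ^ (1/p) :=
    Real.rpow_le_rpow (tsum_nonneg fun i => Real.rpow_nonneg (norm_nonneg _) _)
      hdom.2 (by positivity)
  rw [Real.mul_rpow (Real.rpow_nonneg hM _)
      (tsum_nonneg fun i => Real.rpow_nonneg (norm_nonneg _) _),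
    ← Real.rpow_mul hM, mul_one_div_cancel h0.ne', Real.rpow_one] at h1
  exact h1

lemma q_mul_le {p : ℝ} (hp : 1 ≤ p) {S : Finset G} {f h : G → ℂ}
    (hf : MemBDp p S f) (hh : MemBDp p S h) :
    dirSum p S (f * h) ^ (1/p)
      ≤ supNorm f * dirSum p S h ^ (1/p) + supNorm h * dirSum p S f ^ (1/p) := by
  have h0 : (0:ℝ) < p := one_pos.trans_le hp
  have hsf := (memDp_iff_summable h0 S f).1 hf.2
  have hsh := (memDp_iff_summable h0 S h).1 hh.2
  have hAle : ∀ i : {x // x ∈ S} × G,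
      ‖f (i.2 * (i.1 : G)⁻¹) * D S h i‖ ≤ supNorm f * ‖D S h i‖ := fun i => by
    rw [norm_mul]
    exact mul_le_mul_of_nonneg_right (le_supNorm hf.1 _) (norm_nonneg _)
  have hBle : ∀ i : {x // x ∈ S} × G,
      ‖h i.2 * D S f i‖ ≤ supNorm h * ‖D S f i‖ := fun i => by
    rw [norm_mul]
    exact mul_le_mul_of_nonneg_right (le_supNorm hh.1 _) (norm_nonneg _)
  have hdomA := summable_dom h0 (supNorm_nonneg hf.1) hsh hAle
  have hdomB := summable_dom h0 (supNorm_nonneg hh.1) hsf hBle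
  have step1 : dirSum p S (f * h) ^ (1/p)
      ≤ (∑' i, ‖f (i.2 * (i.1 : G)⁻¹) * D S h i‖ ^ p) ^ (1/p)
        + (∑' i, ‖h i.2 * D S f i‖ ^ p) ^ (1/p) := by
    rw [dirSum_eq_tsum h0 S _ (memDp_mul hp hf hh)]
    have := tsum_rpow_add_le hp hdomA.1 hdomB.1
    simpa only [D_mul, Pi.add_apply] using this
  have bndA := tsum_rpow_dom_le hp (supNorm_nonneg hf.1) hsh hAle
  have bndB := tsum_rpow_dom_le hp (supNorm_nonneg hh.1) hsf hBle
  rw [dirSum_eq_tsum h0 S f hf.2, dirSum_eq_tsum h0 S h hh.2]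
  exact step1.trans (add_le_add bndA bndB)

end BDpAux
end BDpAux

/-- `BD_p(G)` is a commutative Banach algebra under pointwise operations
with the norm `‖f‖_{BD_p} = ‖f‖_∞ + (∑_{s,g}|f(gs⁻¹)−f(g)|^p)^{1/p}`. -/
theorem BDp_is_Banach_algebra {G : Type*} [Group G] [Infinite G] (S : Finset G)
    (hS : PHB.SymmGen S) (p : ℝ) (hp : 1 ≤ p) :
    PHB.MemBDp p S (1 : G → ℂ) ∧
    (∀ f h : G → ℂ, PHB.MemBDp p S f → PHB.MemBDp p S h → PHB.MemBDp p S (f + h)) ∧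
    (∀ (c : ℂ) (f : G → ℂ), PHB.MemBDp p S f → PHB.MemBDp p S (c • f)) ∧
    (∀ f h : G → ℂ, PHB.MemBDp p S f → PHB.MemBDp p S h → PHB.MemBDp p S (f * h)) ∧
    (∀ f h : G → ℂ, f * h = h * f) ∧
    (∀ f : G → ℂ, PHB.MemBDp p S f → (PHB.bdpNorm p S f = 0 ↔ f = 0)) ∧
    (∀ (c : ℂ) (f : G → ℂ), PHB.MemBDp p S f →
      PHB.bdpNorm p S (c • f) = ‖c‖ * PHB.bdpNorm p S f) ∧
    (∀ f h : G → ℂ, PHB.MemBDp p S f → PHB.MemBDp p S h →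
      PHB.bdpNorm p S (f + h) ≤ PHB.bdpNorm p S f + PHB.bdpNorm p S h) ∧
    (∀ f h : G → ℂ, PHB.MemBDp p S f → PHB.MemBDp p S h →
      PHB.bdpNorm p S (f * h) ≤ PHB.bdpNorm p S f * PHB.bdpNorm p S h) ∧
    (∀ u : ℕ → (G → ℂ), (∀ n, PHB.MemBDp p S (u n)) →
      (∀ ε : ℝ, 0 < ε → ∃ N : ℕ, ∀ m ≥ N, ∀ n ≥ N, PHB.bdpNorm p S (u m - u n) < ε) →
      ∃ f : G → ℂ, PHB.MemBDp p S f ∧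
        Filter.Tendsto (fun n => PHB.bdpNorm p S (u n - f)) Filter.atTop (nhds 0)) := by
  open PHB BDpAux in
  refine ⟨?_, ?_, ?_, ?_, ?_, ?_, ?_, ?_, ?_, ?_⟩
  -- 1 : `1 ∈ BD_p`
  case _ =>
    have h0 : (0:ℝ) < p := one_pos.trans_le hp
    refine ⟨⟨1, fun g => by simp⟩, fun s hs => ?_⟩
    have : dpTerm p (1 : G → ℂ) s = fun _ => (0:ℝ) := by
      funext g
      simp [dpTerm, Real.zero_rpow h0.ne']
    rw [this]
    exact summable_zero
  -- 2 : closed under addition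
  case _ =>
    exact fun f h hf hh => ⟨bddFun_add hf.1 hh.1, memDp_add hp hf.2 hh.2⟩
  -- 3 : closed under scalar multiplication
  case _ =>
    exact fun c f hf => ⟨bddFun_smul c hf.1, memDp_smul hp c hf.2⟩
  -- 4 : closed under multiplication
  case _ =>
    exact fun f h hf hh => ⟨bddFun_mul hf.1 hh.1, memDp_mul hp hf hh⟩
  -- 5 : commutativity
  case _ =>
    exact fun f h => mul_comm f h
  -- 6 : norm vanishes iff zero
  case _ =>
    intro f hf
    have h0 : (0:ℝ) < p := one_pos.trans_le hp
    constructor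
    · intro h
      have h1 : 0 ≤ supNorm f := supNorm_nonneg hf.1
      have h2 : 0 ≤ dirSum p S f ^ (1/p) := qpart_nonneg p S f
      have hsup : supNorm f = 0 := by
        have : supNorm f + dirSum p S f ^ (1/p) = 0 := h
        linarith
      funext g
      have h3 : ‖f g‖ ≤ 0 := hsup ▸ le_supNorm hf.1 g
      simpa using le_antisymm h3 (norm_nonneg _)
    · rintro rfl
      show supNorm (0 : G → ℂ) + dirSum p S (0 : G → ℂ) ^ (1/p) = 0
      rw [supNorm_zero, dirSum_zero h0, Real.zero_rpow (by positivity : (1:ℝ)/p ≠ 0)]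
      ring
  -- 7 : homogeneity
  case _ =>
    intro c f hf
    have h0 : (0:ℝ) < p := one_pos.trans_le hp
    show supNorm (c • f) + dirSum p S (c • f) ^ (1/p)
      = ‖c‖ * (supNorm f + dirSum p S f ^ (1/p))
    rw [supNorm_smul, dirSum_smul h0,
      Real.mul_rpow (Real.rpow_nonneg (norm_nonneg c) _) (dirSum_nonneg p S f),
      ← Real.rpow_mul (norm_nonneg c), mul_one_div_cancel h0.ne', Real.rpow_one, mul_add]
  -- 8 : triangle inequality
  case _ =>
    intro f h hf hh
    have h1 := supNorm_add_le hf.1 hh.1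
    have h2 := q_add_le hp hf.2 hh.2
    show supNorm (f + h) + dirSum p S (f + h) ^ (1/p)
      ≤ (supNorm f + dirSum p S f ^ (1/p)) + (supNorm h + dirSum p S h ^ (1/p))
    linarith
  -- 9 : submultiplicativity
  case _ =>
    intro f h hf hh
    have h1 := supNorm_mul_le hf.1 hh.1
    have h2 := q_mul_le hp hf hh
    have hsf := supNorm_nonneg hf.1
    have hsh := supNorm_nonneg hh.1
    have hqf := qpart_nonneg p S f
    have hqh := qpart_nonneg p S h
    show supNorm (f * h) + dirSum p S (f * h) ^ (1/p)
      ≤ (supNorm f + dirSum p S f ^ (1/p)) * (supNorm h + dirSum p S h ^ (1/p))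
    nlinarith [mul_nonneg hqf hqh]
  -- 10 : completeness
  case _ =>
    intro u hu hc
    have h0 : (0:ℝ) < p := one_pos.trans_le hp
    have key : (ENNReal.ofReal p).toReal = p := ENNReal.toReal_ofReal h0.le
    haveI : Fact (1 ≤ ENNReal.ofReal p) := ⟨ENNReal.one_le_ofReal.mpr hp⟩
    have hP0 : (ENNReal.ofReal p) ≠ 0 :=
      (zero_lt_one.trans_le (Fact.out : 1 ≤ ENNReal.ofReal p)).ne'
    have hbdd : ∀ m n : ℕ, BddFun (u m - u n) := fun m n =>
      bddFun_sub (hu m).1 (hu n).1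
    have hpt : ∀ (m n : ℕ) (g : G), ‖u m g - u n g‖ ≤ bdpNorm p S (u m - u n) := by
      intro m n g
      have h1 : ‖u m g - u n g‖ ≤ supNorm (u m - u n) := le_supNorm (hbdd m n) g
      exact h1.trans (le_add_of_nonneg_right (qpart_nonneg p S _))
    -- pointwise limit
    have hcau : ∀ g : G, CauchySeq fun n => u n g := by
      intro g
      rw [Metric.cauchySeq_iff]
      intro ε hε
      obtain ⟨N, hN⟩ := hc ε hε
      exact ⟨N, fun m hm n hn =>
        lt_of_le_of_lt (by simpa [dist_eq_norm] using hpt m n g) (hN m hm n hn)⟩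
    choose f hfg using fun g => cauchySeq_tendsto_of_complete (hcau g)
    -- uniform convergence
    have hsup : ∀ ε : ℝ, 0 < ε → ∃ N, ∀ n ≥ N, ∀ g, ‖u n g - f g‖ ≤ ε := by
      intro ε hε
      obtain ⟨N, hN⟩ := hc ε hε
      refine ⟨N, fun n hn g => ?_⟩
      have hlim : Filter.Tendsto (fun m => ‖u n g - u m g‖) Filter.atTop
          (nhds ‖u n g - f g‖) := (Filter.Tendsto.sub tendsto_const_nhds (hfg g)).norm
      refine le_of_tendsto hlim ?_
      filter_upwards [Filter.eventually_ge_atTop N] with m hm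
      exact (hpt n m g).trans (hN n hn m hm).le
    -- f is bounded
    have hfb : BddFun f := by
      obtain ⟨N, hN⟩ := hsup 1 one_pos
      obtain ⟨M, hM⟩ := (hu N).1
      refine ⟨M + 1, fun g => ?_⟩
      have h1 := hN N le_rfl g
      calc ‖f g‖ = ‖u N g - (u N g - f g)‖ := by ring_nf
        _ ≤ ‖u N g‖ + ‖u N g - f g‖ := norm_sub_le _ _
        _ ≤ M + 1 := add_le_add (hM g) h1
    -- the lp-space part
    set x : ℕ → lp (fun _ : {x // x ∈ S} × G => ℂ) (ENNReal.ofReal p) := fun n =>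
      ⟨D S (u n), (memℓp_iff_memDp hp S (u n)).2 (hu n).2⟩ with hx_def
    have hxapp : ∀ n i, x n i = D S (u n) i := fun n i => rfl
    have hxsub : ∀ m n i, (x m - x n) i = D S (u m - u n) i := by
      intro m n i
      rw [lp.coeFn_sub, Pi.sub_apply, hxapp, hxapp, D_sub, Pi.sub_apply]
    have hxnorm : ∀ m n, ‖x m - x n‖ = dirSum p S (u m - u n) ^ (1/p) := fun m n =>
      norm_lp_eq hp S _ (memDp_sub hp (hu m).2 (hu n).2) _ (hxsub m n)
    have hxcau : CauchySeq x := by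
      rw [Metric.cauchySeq_iff]
      intro ε hε
      obtain ⟨N, hN⟩ := hc ε hε
      refine ⟨N, fun m hm n hn => ?_⟩
      rw [dist_eq_norm, hxnorm m n]
      calc dirSum p S (u m - u n) ^ (1/p) ≤ bdpNorm p S (u m - u n) :=
            le_add_of_nonneg_left (supNorm_nonneg (hbdd m n))
        _ < ε := hN m hm n hn
    obtain ⟨Y, hY⟩ := cauchySeq_tendsto_of_complete hxcau
    have hYnorm : Filter.Tendsto (fun n => ‖x n - Y‖) Filter.atTop (nhds 0) :=
      tendsto_iff_norm_sub_tendsto_zero.mp hY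
    -- identify the limit coordinatewise
    have hYi : ∀ i, Y i = D S f i := by
      intro i
      have h1 : Filter.Tendsto (fun n => x n i) Filter.atTop (nhds (Y i)) := by
        rw [tendsto_iff_norm_sub_tendsto_zero]
        refine squeeze_zero (fun n => norm_nonneg _) (fun n => ?_) hYnorm
        have := lp.norm_apply_le_norm hP0 (x n - Y) i
        simpa [lp.coeFn_sub] using this
      have h2 : Filter.Tendsto (fun n => x n i) Filter.atTop (nhds (D S f i)) :=
        Filter.Tendsto.sub (hfg (i.2 * (i.1 : G)⁻¹)) (hfg i.2)
      exact tendsto_nhds_unique h1 h2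
    have hDf : Memℓp (D S f) (ENNReal.ofReal p) := by
      have h3 := lp.memℓp Y
      rwa [show (Y : ∀ _ : {x // x ∈ S} × G, ℂ) = D S f from funext hYi] at h3
    have hfD : MemDp p S f := (memℓp_iff_memDp hp S f).1 hDf
    refine ⟨f, ⟨hfb, hfD⟩, ?_⟩
    -- convergence of the Dirichlet part
    have hq : Filter.Tendsto (fun n => dirSum p S (u n - f) ^ (1/p)) Filter.atTop
        (nhds 0) := by
      refine hYnorm.congr fun n => ?_
      refine norm_lp_eq hp S _ (memDp_sub hp (hu n).2 hfD) _ fun i => ?_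
      rw [lp.coeFn_sub, Pi.sub_apply, hxapp, hYi, D_sub, Pi.sub_apply]
    -- convergence of the sup part
    have hs : Filter.Tendsto (fun n => supNorm (u n - f)) Filter.atTop (nhds 0) := by
      rw [Metric.tendsto_atTop]
      intro ε hε
      obtain ⟨N, hN⟩ := hsup (ε/2) (half_pos hε)
      refine ⟨N, fun n hn => ?_⟩
      rw [Real.dist_eq, sub_zero,
        abs_of_nonneg (supNorm_nonneg (bddFun_sub (hu n).1 hfb))]
      have : supNorm (u n - f) ≤ ε/2 := ciSup_le fun g => hN n hn g
      linarith
    have := hs.add hq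
    simpa [PHB.bdpNorm] using this
end

section
/- The image of G under the evaluation map i : G → Sp(BD_p(G)), (i(g))(f) = f(g), is dense in the spectrum Sp(BD_p(G)) with respect to the weak-* topology. -/
open Filter Topology

/-!
Take a character `x`, finitely many `fᵢ ∈ BD_p(G)` and `ε > 0`. If no `g ∈ G` had
`|fᵢ(g) - x(fᵢ)| < ε` for all `i`, then `F = ∑ conj(fᵢ - x(fᵢ)) (fᵢ - x(fᵢ))` would satisfy
`|F| ≥ ε²` on `G`. As `|Δₛ(1/F)| ≤ ε⁻⁴ |Δₛ F|`, also `1/F ∈ BD_p(G)`, so `F` is a unit of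
`BD_p(G)`; but `x(F) = 0` because `x(fᵢ - x(fᵢ)) = 0`.
-/

open scoped ENNReal

theorem mem_closure_pi_of_forall_finset {ι : Type*} {X : ι → Type*}
    [∀ i, PseudoMetricSpace (X i)] {s : Set (∀ i, X i)} {x : ∀ i, X i}
    (h : ∀ (I : Finset ι) (ε : ℝ), 0 < ε → ∃ y ∈ s, ∀ i ∈ I, dist (y i) (x i) < ε) :
    x ∈ closure s := by
  rw [mem_closure_iff_nhds]
  intro U hU
  rw [nhds_pi, Filter.mem_pi'] at hU
  obtain ⟨I, t, ht, hIt⟩ := hU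
  have hballs : ∀ᶠ ε in 𝓝[>] (0 : ℝ), ∀ i ∈ I, Metric.ball (x i) ε ⊆ t i := by
    rw [Filter.eventually_all_finset]
    intro i _
    obtain ⟨δ, hδ, hball⟩ := Metric.mem_nhds_iff.1 (ht i)
    filter_upwards [Ioo_mem_nhdsGT hδ] with ε hε
    exact (Metric.ball_subset_ball hε.2.le).trans hball
  obtain ⟨ε, hεt, hε⟩ := (hballs.and self_mem_nhdsWithin).exists
  obtain ⟨y, hys, hy⟩ := h I ε hε
  exact ⟨y, hIt fun i hi => hεt i hi (hy i hi), hys⟩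

theorem Memℓp.mul_of_norm_le {α R : Type*} [NormedRing R] {q : ℝ≥0∞} {f g : α → R} {M : ℝ}
    (hg : Memℓp g q) (hf : ∀ i, ‖f i‖ ≤ M) : Memℓp (f * g) q :=
  ((memℓp_norm_iff.2 hg).const_mul M).mono fun i =>
    (norm_mul_le _ _).trans (mul_le_mul_of_nonneg_right (hf i) (norm_nonneg _))

theorem StarSubalgebra.exists_forall_norm_sub_lt {𝕜 X : Type*} [RCLike 𝕜]
    {A : StarSubalgebra 𝕜 (X → 𝕜)}
    (hA : ∀ f ∈ A, ∀ δ : ℝ, 0 < δ → (∀ x, δ ≤ ‖f x‖) → f⁻¹ ∈ A)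
    (φ : A →ₐ[𝕜] 𝕜) {ι : Type*} (f : ι → A) (t : Finset ι) {ε : ℝ} (hε : 0 < ε) :
    ∃ x, ∀ i ∈ t, ‖(f i : X → 𝕜) x - φ (f i)‖ < ε := by
  by_contra! hfar
  set u : ι → A := fun i => f i - algebraMap 𝕜 A (φ (f i))
  set F : A := ∑ i ∈ t, star (u i) * u i
  have hφF : φ F = 0 := by simp [F, u]
  have hF : ∀ x, (F : X → 𝕜) x = ((∑ i ∈ t, ‖(f i : X → 𝕜) x - φ (f i)‖ ^ 2 : ℝ) : 𝕜) := by
    intro x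
    simp only [F, u, AddSubmonoidClass.coe_finsetSum, Finset.sum_apply, MulMemClass.coe_mul,
      Pi.mul_apply, StarMemClass.coe_star, Pi.star_apply, AddSubgroupClass.coe_sub, Pi.sub_apply,
      SubalgebraClass.coe_algebraMap, Pi.algebraMap_apply, Algebra.algebraMap_self,
      RingHom.id_apply, RCLike.star_def, RCLike.conj_mul, RCLike.ofReal_sum, RCLike.ofReal_pow]
  have hFlow : ∀ x, ε ^ 2 ≤ ‖(F : X → 𝕜) x‖ := by
    intro x
    obtain ⟨i, hi, hfar⟩ := hfar x
    rw [hF, RCLike.norm_ofReal, abs_of_nonneg (by positivity)]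
    calc ε ^ 2 ≤ ‖(f i : X → 𝕜) x - φ (f i)‖ ^ 2 := by gcongr
      _ ≤ _ := Finset.single_le_sum (f := fun i => ‖(f i : X → 𝕜) x - φ (f i)‖ ^ 2)
          (fun _ _ => by positivity) hi
  have hF0 : ∀ x, (F : X → 𝕜) x ≠ 0 := fun x =>
    norm_pos_iff.1 ((pow_pos hε 2).trans_le (hFlow x))
  have hunit : IsUnit F := IsUnit.of_mul_eq_one ⟨_, hA F F.2 _ (by positivity) hFlow⟩
    (Subtype.ext (funext fun x => mul_inv_cancel₀ (hF0 x)))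
  have := hunit.map φ
  rw [hφF] at this
  exact not_isUnit_zero this

namespace PHB

variable {G : Type*} [Group G]

theorem BddFun.exists_nonneg {f : G → ℂ} (hf : BddFun f) : ∃ M, 0 ≤ M ∧ ∀ g, ‖f g‖ ≤ M :=
  let ⟨M, hM⟩ := hf
  ⟨M, (norm_nonneg _).trans (hM 1), hM⟩

/-- `BD_q(G)`, for any exponent `q ∈ [0, ∞]`. -/
def bdSubalgebra (q : ℝ≥0∞) (S : Finset G) : StarSubalgebra ℂ (G → ℂ) where
  carrier := {f | BddFun f ∧ ∀ s ∈ S, Memℓp (fun g => f (g * s⁻¹) - f g) q}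
  mul_mem' := by
    rintro f h ⟨hfb, hf⟩ ⟨hhb, hh⟩
    obtain ⟨M, hM0, hM⟩ := hfb.exists_nonneg
    obtain ⟨N, hN⟩ := hhb
    refine ⟨⟨M * N, fun g => ?_⟩, fun s hs => ?_⟩
    · rw [Pi.mul_apply, norm_mul]
      exact mul_le_mul (hM g) (hN g) (norm_nonneg _) hM0
    · have hdiff : (fun g => (f * h) (g * s⁻¹) - (f * h) g) =
          (fun g => f (g * s⁻¹)) * (fun g => h (g * s⁻¹) - h g) +
            h * (fun g => f (g * s⁻¹) - f g) := by
        funext g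
        simp only [Pi.mul_apply, Pi.add_apply]
        ring
      rw [hdiff]
      exact ((hh s hs).mul_of_norm_le fun g => hM (g * s⁻¹)).add ((hf s hs).mul_of_norm_le hN)
  add_mem' := by
    rintro f h ⟨⟨M, hM⟩, hf⟩ ⟨⟨N, hN⟩, hh⟩
    refine ⟨⟨M + N, fun g => (norm_add_le _ _).trans (add_le_add (hM g) (hN g))⟩, fun s hs => ?_⟩
    convert (hf s hs).add (hh s hs) using 1
    funext g
    simp only [Pi.add_apply]
    ring
  algebraMap_mem' c := by
    refine ⟨⟨‖c‖, fun _ => le_rfl⟩, fun s _ => ?_⟩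
    simp only [Pi.algebraMap_apply, sub_self]
    exact zero_mem_ℓp'
  star_mem' := by
    rintro f ⟨⟨M, hM⟩, hf⟩
    refine ⟨⟨M, fun g => by simpa using hM g⟩, fun s hs => ?_⟩
    convert (hf s hs).star_mem using 1
    funext g
    simp only [Pi.star_apply, star_sub]

theorem inv_mem_bdSubalgebra {q : ℝ≥0∞} {S : Finset G} {f : G → ℂ} (hf : f ∈ bdSubalgebra q S)
    {δ : ℝ} (hδ : 0 < δ) (hlow : ∀ g, δ ≤ ‖f g‖) : f⁻¹ ∈ bdSubalgebra q S := by
  have hinv : ∀ g, ‖(f g)⁻¹‖ ≤ δ⁻¹ := fun g => by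
    rw [norm_inv]
    exact inv_anti₀ hδ (hlow g)
  have hne : ∀ g, f g ≠ 0 := fun g => norm_pos_iff.1 (hδ.trans_le (hlow g))
  refine ⟨⟨δ⁻¹, hinv⟩, fun s hs => ?_⟩
  have hbound : ∀ g, ‖-((f (g * s⁻¹))⁻¹ * (f g)⁻¹)‖ ≤ δ⁻¹ * δ⁻¹ := fun g => by
    rw [norm_neg, norm_mul]
    exact mul_le_mul (hinv _) (hinv g) (norm_nonneg _) (by positivity)
  have hdiff : (fun g => f⁻¹ (g * s⁻¹) - f⁻¹ g) =
      (fun g => -((f (g * s⁻¹))⁻¹ * (f g)⁻¹)) * (fun g => f (g * s⁻¹) - f g) := by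
    funext g
    simp only [Pi.inv_apply, Pi.mul_apply]
    field_simp [hne g, hne (g * s⁻¹)]
    ring
  rw [hdiff]
  exact (hf.2 s hs).mul_of_norm_le hbound

theorem mem_bdSubalgebra_ofReal_iff {p : ℝ} (hp : 0 < p) {S : Finset G} {f : G → ℂ} :
    f ∈ bdSubalgebra (ENNReal.ofReal p) S ↔ MemBDp p S f := by
  refine and_congr Iff.rfl (forall₂_congr fun s _ => ?_)
  rw [memℓp_gen_iff (by rwa [ENNReal.toReal_ofReal hp.le]), ENNReal.toReal_ofReal hp.le]
  rfl

theorem BDpChar.apply_const {p : ℝ} (hp : 0 < p) {S : Finset G} (x : BDpChar p S) (c : ℂ)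
    (hc : MemBDp p S fun _ => c) : x.toFun ⟨fun _ => c, hc⟩ = c := by
  have h1 := (mem_bdSubalgebra_ofReal_iff hp).1 (one_mem (bdSubalgebra (ENNReal.ofReal p) S))
  have hsmul : (c • 1 : G → ℂ) = fun _ => c := funext fun _ => mul_one c
  calc x.toFun ⟨fun _ => c, hc⟩ = x.toFun ⟨c • 1, hsmul ▸ hc⟩ :=
        congrArg x.toFun (Subtype.ext hsmul.symm)
    _ = c := by rw [x.map_smul c ⟨1, h1⟩, x.map_one, mul_one]

def BDpChar.toAlgHom {p : ℝ} (hp : 0 < p) {S : Finset G} (x : BDpChar p S) :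
    bdSubalgebra (ENNReal.ofReal p) S →ₐ[ℂ] ℂ where
  toFun f := x.toFun ⟨f, (mem_bdSubalgebra_ofReal_iff hp).1 f.2⟩
  map_one' := x.map_one _
  map_mul' f h := x.map_mul ⟨f, (mem_bdSubalgebra_ofReal_iff hp).1 f.2⟩
    ⟨h, (mem_bdSubalgebra_ofReal_iff hp).1 h.2⟩ _
  map_zero' := x.apply_const hp 0 _
  map_add' f h := x.map_add ⟨f, (mem_bdSubalgebra_ofReal_iff hp).1 f.2⟩
    ⟨h, (mem_bdSubalgebra_ofReal_iff hp).1 h.2⟩ _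
  commutes' c := x.apply_const hp c _

end PHB

theorem evalChar_dense_general {G : Type*} [Group G] (S : Finset G) (p : ℝ) (hp : 1 ≤ p) :
    Dense (Set.range (PHB.evalChar p S : G → PHB.BDpChar p S)) := by
  have hp0 : 0 < p := by linarith
  rw [(Topology.IsInducing.induced PHB.BDpChar.toFun).dense_iff]
  intro x
  rw [← Set.range_comp]
  refine mem_closure_pi_of_forall_finset (X := fun _ => ℂ) fun t ε hε => ?_
  let incl : {f : G → ℂ // PHB.MemBDp p S f} → PHB.bdSubalgebra (ENNReal.ofReal p) S :=
    fun f => ⟨f.1, (PHB.mem_bdSubalgebra_ofReal_iff hp0).2 f.2⟩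
  obtain ⟨g, hg⟩ := StarSubalgebra.exists_forall_norm_sub_lt
    (fun _ hf _ hδ hlow => PHB.inv_mem_bdSubalgebra hf hδ hlow) (x.toAlgHom hp0) incl t hε
  exact ⟨_, ⟨g, rfl⟩, fun f hf => (dist_eq_norm _ _).trans_lt (hg f hf)⟩

/-- the image of `G` under the evaluation map is dense in the
spectrum `Sp(BD_p(G))` with the weak-* topology. -/
theorem evalChar_dense {G : Type*} [Group G] [Infinite G] (S : Finset G)
    (hS : PHB.SymmGen S) (p : ℝ) (hp : 1 ≤ p) :
    Dense (Set.range (PHB.evalChar p S : G → PHB.BDpChar p S)) :=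
  evalChar_dense_general S p hp
end

section
/- The p-harmonic boundary ∂_p(G) is empty if and only if the constant function 1_G lies in B(closure of ℂG in D_p(G)). -/
open Filter Topology

section Aux

open Filter PHB

variable {G : Type*} [Group G]

lemma dpTerm_nonneg (p : ℝ) (f : G → ℂ) (s g : G) : 0 ≤ PHB.dpTerm p f s g :=
  Real.rpow_nonneg (norm_nonneg _) _

lemma rpow_add_le_aux {p : ℝ} (hp : 0 < p) {a b : ℝ} (ha : 0 ≤ a) (hb : 0 ≤ b) :
    (a + b) ^ p ≤ 2 ^ p * (a ^ p + b ^ p) := by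
  have h1 : a + b ≤ 2 * max a b := by
    rcases le_total a b with h | h
    · simp [max_eq_right h]; nlinarith
    · simp [max_eq_left h]; nlinarith
  have h0 : (0:ℝ) ≤ max a b := le_max_of_le_left ha
  calc (a + b) ^ p ≤ (2 * max a b) ^ p := Real.rpow_le_rpow (by linarith) h1 hp.le
    _ = 2 ^ p * (max a b) ^ p := Real.mul_rpow (by norm_num) h0
    _ ≤ 2 ^ p * (a ^ p + b ^ p) := by
        apply mul_le_mul_of_nonneg_left _ (Real.rpow_nonneg (by norm_num) p)
        rcases le_total a b with h | h
        · rw [max_eq_right h]; nlinarith [Real.rpow_nonneg ha p]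
        · rw [max_eq_left h]; nlinarith [Real.rpow_nonneg hb p]

lemma summable_dpTerm_finsupp {p : ℝ} (hp : p ≠ 0) {k : G → ℂ}
    (hk : (Function.support k).Finite) (s : G) : Summable (PHB.dpTerm p k s) := by
  apply summable_of_ne_finset_zero (s := ((hk.image (fun g => g * s)).union hk).toFinset)
  intro g hg
  rw [Set.Finite.mem_toFinset, Set.mem_union] at hg
  push_neg at hg
  have h1 : k (g * s⁻¹) = 0 := by
    by_contra hne
    exact hg.1 ⟨g * s⁻¹, hne, by simp⟩
  have h2 : k g = 0 := by
    by_contra hne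
    exact hg.2 hne
  simp [PHB.dpTerm, h1, h2, Real.zero_rpow hp]

lemma memDp_sub_finsupp {p : ℝ} (hp : 0 < p) {S : Finset G} {f k : G → ℂ}
    (hf : PHB.MemDp p S f) (hk : (Function.support k).Finite) :
    PHB.MemDp p S (f - k) := by
  intro s hs
  have hmaj : Summable (fun g => 2 ^ p * (PHB.dpTerm p f s g + PHB.dpTerm p k s g)) :=
    (Summable.mul_left _ ((hf s hs).add (summable_dpTerm_finsupp hp.ne' hk s)))
  apply Summable.of_nonneg_of_le (fun g => dpTerm_nonneg p _ s g) _ hmaj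
  intro g
  have heq : (f - k) (g * s⁻¹) - (f - k) g = (f (g * s⁻¹) - f g) - (k (g * s⁻¹) - k g) := by
    simp [Pi.sub_apply]; ring
  calc PHB.dpTerm p (f - k) s g = ‖(f (g * s⁻¹) - f g) - (k (g * s⁻¹) - k g)‖ ^ p := by
        rw [PHB.dpTerm, heq]
    _ ≤ (‖f (g * s⁻¹) - f g‖ + ‖k (g * s⁻¹) - k g‖) ^ p :=
        Real.rpow_le_rpow (norm_nonneg _) (norm_sub_le _ _) hp.le
    _ ≤ 2 ^ p * (PHB.dpTerm p f s g + PHB.dpTerm p k s g) :=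
        rpow_add_le_aux hp (norm_nonneg _) (norm_nonneg _)

lemma memDp_one {p : ℝ} (hp : p ≠ 0) (S : Finset G) : PHB.MemDp p S (1 : G → ℂ) := by
  intro s _
  have : PHB.dpTerm p (1 : G → ℂ) s = fun _ => 0 := by
    funext g; simp [PHB.dpTerm, Real.zero_rpow hp]
  rw [this]; exact summable_zero

lemma memBDp_one {p : ℝ} (hp : p ≠ 0) (S : Finset G) : PHB.MemBDp p S (1 : G → ℂ) :=
  ⟨⟨1, fun g => by simp⟩, memDp_one hp S⟩

end Aux
section Char

open Filter PHB

variable {G : Type*} [Group G]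

omit [Group G] in
lemma exists_ulim (U : Ultrafilter G) {f : G → ℂ} (hb : PHB.BddFun f) :
    ∃ c : ℂ, Tendsto f (↑U) (nhds c) := by
  obtain ⟨M, hM⟩ := hb
  have h1 : ↑(U.map f) ≤ Filter.principal (Metric.closedBall (0:ℂ) M) := by
    rw [Ultrafilter.coe_map, Filter.le_principal_iff, Filter.mem_map]
    have : (f ⁻¹' Metric.closedBall 0 M) = Set.univ := by
      ext g; simp only [Set.mem_preimage, Metric.mem_closedBall, dist_eq_norm, sub_zero, Set.mem_univ, iff_true]
      exact hM g
    rw [this]; exact Filter.univ_mem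
  obtain ⟨c, _, hc⟩ := (isCompact_closedBall (0:ℂ) M).ultrafilter_le_nhds (U.map f) h1
  exact ⟨c, by rwa [Ultrafilter.coe_map] at hc⟩

/-- The ultralimit character on `BD_p(G)` attached to an ultrafilter `U`. -/
noncomputable def uchar (p : ℝ) (S : Finset G) (U : Ultrafilter G) : PHB.BDpChar p S where
  toFun f := Classical.choose (exists_ulim U f.2.1)
  map_add f h hm := by
    have hf := Classical.choose_spec (exists_ulim U f.2.1)
    have hh := Classical.choose_spec (exists_ulim U h.2.1)
    have hsum := Classical.choose_spec (exists_ulim U hm.1)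
    exact tendsto_nhds_unique hsum (hf.add hh)
  map_mul f h hm := by
    have hf := Classical.choose_spec (exists_ulim U f.2.1)
    have hh := Classical.choose_spec (exists_ulim U h.2.1)
    have hsum := Classical.choose_spec (exists_ulim U hm.1)
    exact tendsto_nhds_unique hsum (hf.mul hh)
  map_smul c f hm := by
    have hf := Classical.choose_spec (exists_ulim U f.2.1)
    have hsum := Classical.choose_spec (exists_ulim U hm.1)
    exact tendsto_nhds_unique hsum ((hf.const_mul c).congr
      (fun x => rfl))
  map_one hm := by
    have hsum := Classical.choose_spec (exists_ulim U hm.1)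
    exact tendsto_nhds_unique hsum tendsto_const_nhds

lemma uchar_tendsto (p : ℝ) (S : Finset G) (U : Ultrafilter G)
    (f : {f : G → ℂ // PHB.MemBDp p S f}) :
    Tendsto f.1 (↑U) (nhds ((uchar p S U).toFun f)) :=
  Classical.choose_spec (exists_ulim U f.2.1)

end Char
section Approx

open Filter PHB

variable {G : Type*} [Group G]

lemma min_lip_aux (a b c : ℝ) : |min a c - min b c| ≤ |a - b| := by
  rcases le_total a c with h1 | h1 <;> rcases le_total b c with h2 | h2 <;>
    rw [abs_le] <;>
    simp only [min_eq_left, min_eq_right, h1, h2] <;>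
    constructor <;>
    nlinarith [le_abs_self (a - b), neg_abs_le (a - b)]

lemma dirSum_nonneg' (p : ℝ) (S : Finset G) (f : G → ℂ) : 0 ≤ PHB.dirSum p S f :=
  Finset.sum_nonneg fun s _ => tsum_nonneg fun g => dpTerm_nonneg p f s g

lemma approx_one {p : ℝ} (hp : 0 < p) (S : Finset G) (P : Finset ((G → ℂ) × ℝ))
    (hPne : P.Nonempty) (E₀ : Set G) (hE₀ : E₀.Finite)
    (hPprop : ∀ q ∈ P, 0 < q.2 ∧ PHB.MemBDp p S q.1 ∧ PHB.InBClosCG p S q.1)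
    (hcover : ∀ g, g ∉ E₀ → ∃ q ∈ P, q.2 < ‖q.1 g‖)
    {ε : ℝ} (hε : 0 < ε) :
    ∃ h : G → ℂ, (Function.support h).Finite ∧
      PHB.dpNorm p S ((1 : G → ℂ) - h) < ε := by
  classical
  set δ : ℝ := P.inf' hPne (fun q => q.2) with hδdef
  have hδpos : 0 < δ := by
    rw [hδdef, Finset.lt_inf'_iff]; exact fun q hq => (hPprop q hq).1
  set C : ℝ := ((P.card : ℝ) + 1) ^ (1/p) with hCdef
  have hCnn : 0 ≤ C := Real.rpow_nonneg (by positivity) _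
  set ε' : ℝ := ε * δ / (C + 1) with hε'def
  have hε'pos : 0 < ε' := by
    apply div_pos (mul_pos hε hδpos) (by linarith)
  have happrox : ∀ q ∈ P, ∃ kk : G → ℂ, (Function.support kk).Finite ∧
      PHB.dpNorm p S (q.1 - kk) < ε' := fun q hq => (hPprop q hq).2.2.2.2 ε' hε'pos
  choose k hk1 hk2 using happrox
  set Q : Finset (G → ℂ) := P.attach.image (fun x => x.1.1 - k x.1 x.2) with hQdef
  have hQne : Q.Nonempty := by
    obtain ⟨q, hq⟩ := hPne
    exact ⟨_, Finset.mem_image_of_mem _ (Finset.mem_attach _ ⟨q, hq⟩)⟩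
  have hQprop : ∀ w ∈ Q, PHB.MemDp p S w ∧ PHB.dirSum p S w ≤ ε' ^ p ∧ ‖w 1‖ ≤ ε' := by
    intro w hw
    rw [hQdef, Finset.mem_image] at hw
    obtain ⟨x, hx, rfl⟩ := hw
    set w := x.1.1 - k x.1 x.2 with hwdef
    have hdp : PHB.MemDp p S w := memDp_sub_finsupp hp ((hPprop x.1 x.2).2.1).2 (hk1 x.1 x.2)
    have hdpn : PHB.dpNorm p S w < ε' := hk2 x.1 x.2
    have hXnn : 0 ≤ PHB.dirSum p S w + ‖w 1‖ ^ p :=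
      add_nonneg (dirSum_nonneg' p S w) (Real.rpow_nonneg (norm_nonneg _) _)
    have hX : PHB.dirSum p S w + ‖w 1‖ ^ p < ε' ^ p := by
      have h2 := Real.rpow_lt_rpow (Real.rpow_nonneg hXnn _) hdpn hp
      rwa [← Real.rpow_mul hXnn, one_div_mul_cancel hp.ne', Real.rpow_one] at h2
    refine ⟨hdp, ?_, ?_⟩
    · have := Real.rpow_nonneg (norm_nonneg (w 1)) p
      linarith
    · by_contra hlt
      push_neg at hlt
      have := Real.rpow_le_rpow hε'pos.le hlt.le hp.le
      have := dirSum_nonneg' p S w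
      linarith
  set E : Set G := E₀ ∪ ⋃ x ∈ P.attach, Function.support (k x.1 x.2) with hEdef
  have hEfin : E.Finite :=
    hE₀.union (Set.Finite.biUnion P.attach.finite_toSet (fun x _ => hk1 x.1 x.2))
  set Mx : G → ℝ := fun g => Q.sup' hQne (fun w => ‖w g‖) with hMxdef
  set v : G → ℝ := fun g => min (δ⁻¹ * Mx g) 1 with hvdef
  have hMxnn : ∀ g, 0 ≤ Mx g := by
    intro g
    obtain ⟨w, hw⟩ := id hQne
    refine le_trans (norm_nonneg (w g)) ?_
    show ‖w g‖ ≤ Q.sup' hQne fun w => ‖w g‖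
    exact Finset.le_sup' (fun w => ‖w g‖) hw
  have hvnn : ∀ g, 0 ≤ v g := fun g =>
    le_min (mul_nonneg (inv_nonneg.mpr hδpos.le) (hMxnn g)) one_pos.le
  have hv1 : ∀ g, g ∉ E → v g = 1 := by
    intro g hg
    have hgE₀ : g ∉ E₀ := fun h => hg (Set.mem_union_left _ h)
    obtain ⟨q, hq, hlt⟩ := hcover g hgE₀
    have hxat : (⟨q, hq⟩ : {x // x ∈ P}) ∈ P.attach := Finset.mem_attach _ _
    have hwQ : q.1 - k q hq ∈ Q := Finset.mem_image.mpr ⟨⟨q, hq⟩, hxat, rfl⟩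
    have hk0 : k q hq g = 0 := by
      by_contra h0
      exact hg (Set.mem_union_right _ (Set.mem_biUnion hxat h0))
    have hnorm : ‖(q.1 - k q hq) g‖ = ‖q.1 g‖ := by simp [hk0]
    have hMx : δ ≤ Mx g := by
      calc δ ≤ q.2 := Finset.inf'_le _ hq
        _ ≤ ‖q.1 g‖ := hlt.le
        _ = ‖(q.1 - k q hq) g‖ := hnorm.symm
        _ ≤ Mx g := by
            show ‖(q.1 - k q hq) g‖ ≤ Q.sup' hQne fun w => ‖w g‖
            exact Finset.le_sup' (fun w => ‖w g‖) hwQ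
    have h1le : (1:ℝ) ≤ δ⁻¹ * Mx g := by
      rw [← inv_mul_cancel₀ hδpos.ne']
      exact mul_le_mul_of_nonneg_left hMx (inv_nonneg.mpr hδpos.le)
    exact min_eq_right h1le
  refine ⟨fun g => 1 - (v g : ℂ), ?_, ?_⟩
  · apply hEfin.subset
    intro g hg
    by_contra hgE
    rw [Function.mem_support] at hg
    apply hg
    rw [hv1 g hgE]
    norm_num
  · have heq : ((1 : G → ℂ) - fun g => 1 - (v g : ℂ)) = fun g => (v g : ℂ) := by
      funext g; simp
    rw [heq]
    set vc : G → ℂ := fun g => (v g : ℂ) with hvcdef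
    have hterm : ∀ s g, PHB.dpTerm p vc s g = |v (g * s⁻¹) - v g| ^ p := by
      intro s g
      rw [PHB.dpTerm]
      congr 1
      rw [hvcdef]
      push_cast
      rw [← Complex.ofReal_sub, Complex.norm_real, Real.norm_eq_abs]
    have hlip : ∀ s g, PHB.dpTerm p vc s g ≤ (δ ^ p)⁻¹ * ∑ w ∈ Q, PHB.dpTerm p w s g := by
      intro s g
      set a := g * s⁻¹
      set b := g
      set N : ℝ := Q.sup' hQne (fun w => ‖w a - w b‖) with hNdef
      have hNnn : 0 ≤ N := by
        obtain ⟨w, hw⟩ := id hQne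
        refine le_trans (norm_nonneg (w a - w b)) ?_
        show ‖w a - w b‖ ≤ Q.sup' hQne fun w => ‖w a - w b‖
        exact Finset.le_sup' (fun w => ‖w a - w b‖) hw
      have hNle : ∀ w ∈ Q, ‖w a - w b‖ ≤ N := by
        intro w hw
        show ‖w a - w b‖ ≤ Q.sup' hQne fun w => ‖w a - w b‖
        exact Finset.le_sup' (fun w => ‖w a - w b‖) hw
      have hMle : ∀ (c : G), ∀ w ∈ Q, ‖w c‖ ≤ Mx c := by
        intro c w hw
        show ‖w c‖ ≤ Q.sup' hQne fun w => ‖w c‖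
        exact Finset.le_sup' (fun w => ‖w c‖) hw
      have hstep2 : |Mx a - Mx b| ≤ N := by
        rw [abs_sub_le_iff]
        constructor
        · rw [sub_le_iff_le_add]
          apply Finset.sup'_le
          intro w hw
          have h1 := norm_sub_norm_le (w a) (w b)
          have h2 := hMle b w hw
          have h3 := hNle w hw
          linarith
        · rw [sub_le_iff_le_add]
          apply Finset.sup'_le
          intro w hw
          have h1 := norm_sub_norm_le (w b) (w a)
          rw [norm_sub_rev] at h1
          have h2 := hMle a w hw
          have h3 := hNle w hw
          linarith
      have hstep1 : |v a - v b| ≤ δ⁻¹ * N := by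
        calc |v a - v b| ≤ |δ⁻¹ * Mx a - δ⁻¹ * Mx b| := min_lip_aux _ _ 1
          _ = δ⁻¹ * |Mx a - Mx b| := by
              rw [← mul_sub, abs_mul, abs_of_pos (inv_pos.mpr hδpos)]
          _ ≤ δ⁻¹ * N := mul_le_mul_of_nonneg_left hstep2 (inv_nonneg.mpr hδpos.le)
      obtain ⟨w₀, hw₀Q, hNw⟩ := Finset.exists_mem_eq_sup' hQne (fun w => ‖w a - w b‖)
      calc PHB.dpTerm p vc s g = |v a - v b| ^ p := hterm s g
        _ ≤ (δ⁻¹ * N) ^ p := Real.rpow_le_rpow (abs_nonneg _) hstep1 hp.le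
        _ = (δ⁻¹) ^ p * N ^ p := Real.mul_rpow (inv_nonneg.mpr hδpos.le) hNnn
        _ = (δ ^ p)⁻¹ * N ^ p := by rw [Real.inv_rpow hδpos.le]
        _ ≤ (δ ^ p)⁻¹ * ∑ w ∈ Q, PHB.dpTerm p w s g := by
            apply mul_le_mul_of_nonneg_left _ (inv_nonneg.mpr (Real.rpow_nonneg hδpos.le _))
            have : N ^ p = PHB.dpTerm p w₀ s g := by rw [hNdef, hNw]; rfl
            rw [this]
            exact Finset.single_le_sum (fun w _ => dpTerm_nonneg p w s g) hw₀Q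
    have hsumQ : ∀ s ∈ S, Summable (fun g => ∑ w ∈ Q, PHB.dpTerm p w s g) :=
      fun s hs => summable_sum (fun w hw => (hQprop w hw).1 s hs)
    have hsumvc : ∀ s ∈ S, Summable (PHB.dpTerm p vc s) := by
      intro s hs
      exact Summable.of_nonneg_of_le (fun g => dpTerm_nonneg p vc s g) (hlip s)
        ((hsumQ s hs).mul_left _)
    have htsum : ∀ s ∈ S, ∑' g, PHB.dpTerm p vc s g ≤
        (δ ^ p)⁻¹ * ∑ w ∈ Q, ∑' g, PHB.dpTerm p w s g := by
      intro s hs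
      calc ∑' g, PHB.dpTerm p vc s g
          ≤ ∑' g, ((δ ^ p)⁻¹ * ∑ w ∈ Q, PHB.dpTerm p w s g) :=
            Summable.tsum_le_tsum (hlip s) (hsumvc s hs) ((hsumQ s hs).mul_left _)
        _ = (δ ^ p)⁻¹ * ∑' g, ∑ w ∈ Q, PHB.dpTerm p w s g := tsum_mul_left
        _ = (δ ^ p)⁻¹ * ∑ w ∈ Q, ∑' g, PHB.dpTerm p w s g := by
            rw [Summable.tsum_finsetSum (fun w hw => (hQprop w hw).1 s hs)]
    have hdir : PHB.dirSum p S vc ≤ (δ ^ p)⁻¹ * ((P.card : ℝ) * ε' ^ p) := by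
      calc PHB.dirSum p S vc ≤ ∑ s ∈ S, (δ ^ p)⁻¹ * ∑ w ∈ Q, ∑' g, PHB.dpTerm p w s g :=
            Finset.sum_le_sum htsum
        _ = (δ ^ p)⁻¹ * ∑ w ∈ Q, PHB.dirSum p S w := by
            rw [← Finset.mul_sum, Finset.sum_comm]
            rfl
        _ ≤ (δ ^ p)⁻¹ * ((P.card : ℝ) * ε' ^ p) := by
            apply mul_le_mul_of_nonneg_left _ (inv_nonneg.mpr (Real.rpow_nonneg hδpos.le _))
            calc ∑ w ∈ Q, PHB.dirSum p S w ≤ ∑ _w ∈ Q, ε' ^ p :=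
                  Finset.sum_le_sum (fun w hw => (hQprop w hw).2.1)
              _ = (Q.card : ℝ) * ε' ^ p := by rw [Finset.sum_const, nsmul_eq_mul]
              _ ≤ (P.card : ℝ) * ε' ^ p := by
                  apply mul_le_mul_of_nonneg_right _ (Real.rpow_nonneg hε'pos.le _)
                  exact_mod_cast le_trans Finset.card_image_le (le_of_eq P.card_attach)
    have hv1bound : v 1 ≤ ε' / δ := by
      have hMx1 : Mx 1 ≤ ε' := by
        show (Q.sup' hQne fun w => ‖w 1‖) ≤ ε'
        exact Finset.sup'_le _ _ (fun w hw => (hQprop w hw).2.2)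
      calc v 1 ≤ δ⁻¹ * Mx 1 := min_le_left _ _
        _ ≤ δ⁻¹ * ε' := mul_le_mul_of_nonneg_left hMx1 (inv_nonneg.mpr hδpos.le)
        _ = ε' / δ := by rw [inv_mul_eq_div]
    have hnormvc1 : ‖vc 1‖ = v 1 := by
      rw [hvcdef]
      rw [Complex.norm_real, Real.norm_eq_abs, abs_of_nonneg (hvnn 1)]
    have hXle : PHB.dirSum p S vc + ‖vc 1‖ ^ p ≤ ((P.card : ℝ) + 1) * (ε' / δ) ^ p := by
      have h1 : ‖vc 1‖ ^ p ≤ (ε' / δ) ^ p := by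
        rw [hnormvc1]
        exact Real.rpow_le_rpow (hvnn 1) hv1bound hp.le
      have h2 : (δ ^ p)⁻¹ * ((P.card : ℝ) * ε' ^ p) = (P.card : ℝ) * (ε' / δ) ^ p := by
        rw [Real.div_rpow hε'pos.le hδpos.le]
        ring
      rw [h2] at hdir
      linarith
    have hXnn : 0 ≤ PHB.dirSum p S vc + ‖vc 1‖ ^ p :=
      add_nonneg (dirSum_nonneg' p S vc) (Real.rpow_nonneg (norm_nonneg _) _)
    have hfinal : PHB.dpNorm p S vc ≤ C * (ε' / δ) := by
      rw [PHB.dpNorm]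
      calc (PHB.dirSum p S vc + ‖vc 1‖ ^ p) ^ (1/p)
          ≤ (((P.card : ℝ) + 1) * (ε' / δ) ^ p) ^ (1/p) :=
            Real.rpow_le_rpow hXnn hXle (by positivity)
        _ = C * (ε' / δ) := by
            rw [Real.mul_rpow (by positivity) (Real.rpow_nonneg (by positivity) _),
              ← Real.rpow_mul (by positivity), mul_one_div_cancel hp.ne', Real.rpow_one]
    have harith : C * (ε' / δ) < ε := by
      have hCne : (0:ℝ) < C + 1 := by linarith
      have h1 : ε' / δ = ε / (C + 1) := by
        rw [hε'def]
        field_simp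
      rw [h1, mul_div_assoc']
      rw [div_lt_iff₀ hCne]
      nlinarith
    exact lt_of_le_of_lt hfinal harith

end Approx
/-- the `p`-harmonic boundary is empty iff the constant function
`1_G` lies in the bounded part of the `D_p`-closure of `ℂG`. -/
theorem pBoundary_empty_iff {G : Type*} [Group G] [Infinite G] (S : Finset G)
    (hS : PHB.SymmGen S) (p : ℝ) (hp : 1 < p) :
    PHB.pBoundary p S = ∅ ↔ PHB.InBClosCG p S (1 : G → ℂ) := by
  have hp0 : 0 < p := lt_trans one_pos hp
  constructor
  · intro hbd
    classical
    set Dset : Set (Set G) := {A | Aᶜ.Finite ∨ ∃ f : G → ℂ, ∃ δ : ℝ, 0 < δ ∧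
      PHB.MemBDp p S f ∧ PHB.InBClosCG p S f ∧ A = {g | ‖f g‖ ≤ δ}} with hDset
    have hbot : ¬ (Filter.generate Dset).NeBot := by
      intro hne
      obtain ⟨U, hU⟩ := Ultrafilter.exists_le (Filter.generate Dset)
      have hmemU : ∀ A ∈ Dset, A ∈ U := fun A hA => hU (Filter.mem_generate_of_mem hA)
      set x := uchar p S U with hxdef
      have hx : x ∉ PHB.pBoundary p S := by rw [hbd]; exact Set.notMem_empty x
      have hc1 : ∀ g₀ : G, x ≠ PHB.evalChar p S g₀ := by
        intro g₀ heq
        set dg : G → ℂ := fun y => if y = g₀ then 1 else 0 with hdg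
        have hsupp : (Function.support dg).Finite := by
          apply (Set.finite_singleton g₀).subset
          intro y hy
          rw [Function.mem_support, hdg] at hy
          by_contra hne'
          simp only [Set.mem_singleton_iff] at hne'
          exact hy (if_neg hne')
        have hm : PHB.MemBDp p S dg := by
          refine ⟨⟨1, fun g => ?_⟩, fun s hs => summable_dpTerm_finsupp hp0.ne' hsupp s⟩
          rw [hdg]; dsimp only; split <;> simp
        have h0 : Filter.Tendsto dg (↑U) (nhds 0) := by
          have hc : ({g₀}ᶜ : Set G) ∈ U := hmemU _ (Or.inl (by simp))
          refine Filter.Tendsto.congr' ?_ tendsto_const_nhds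
          filter_upwards [hc] with y hy
          rw [hdg]
          simp only [Set.mem_compl_iff, Set.mem_singleton_iff] at hy
          exact (if_neg hy).symm
        have h1 : x.toFun ⟨dg, hm⟩ = 0 :=
          tendsto_nhds_unique (uchar_tendsto p S U ⟨dg, hm⟩) h0
        have h2 : x.toFun ⟨dg, hm⟩ = 1 := by
          rw [heq]
          show dg g₀ = 1
          rw [hdg]; simp
        rw [h1] at h2
        exact zero_ne_one h2
      have hc2 : ¬ ∀ (f : G → ℂ) (hf : PHB.MemBDp p S f),
          PHB.InBClosCG p S f → x.toFun ⟨f, hf⟩ = 0 := fun h => hx ⟨hc1, h⟩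
      push_neg at hc2
      obtain ⟨f, hf, hcl, hne0⟩ := hc2
      have hcpos : 0 < ‖x.toFun ⟨f, hf⟩‖ / 2 := half_pos (norm_pos_iff.mpr hne0)
      have hA : {g | ‖f g‖ ≤ ‖x.toFun ⟨f, hf⟩‖ / 2} ∈ U :=
        hmemU _ (Or.inr ⟨f, ‖x.toFun ⟨f, hf⟩‖ / 2, hcpos, hf, hcl, rfl⟩)
      have hT := uchar_tendsto p S U ⟨f, hf⟩
      have hB : ∀ᶠ g in (↑U : Filter G),
          dist (f g) (x.toFun ⟨f, hf⟩) < ‖x.toFun ⟨f, hf⟩‖ / 2 :=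
        Metric.tendsto_nhds.mp hT _ hcpos
      have hA' : ∀ᶠ g in (↑U : Filter G), ‖f g‖ ≤ ‖x.toFun ⟨f, hf⟩‖ / 2 := hA
      obtain ⟨g, hg1, hg2⟩ := (hA'.and hB).exists
      rw [dist_eq_norm] at hg2
      have h3 : ‖x.toFun ⟨f, hf⟩‖ - ‖f g‖ ≤ ‖f g - x.toFun ⟨f, hf⟩‖ := by
        have := norm_sub_norm_le (x.toFun ⟨f, hf⟩) (f g)
        rw [norm_sub_rev] at this
        linarith
      linarith
    rw [Filter.not_neBot] at hbot
    have hempty : (∅ : Set G) ∈ Filter.generate Dset := by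
      rw [hbot]; exact Filter.mem_bot
    rw [Filter.mem_generate_iff] at hempty
    obtain ⟨t, htD, htfin, htint⟩ := hempty
    have hE₀fin : (⋃ A ∈ {A ∈ t | Aᶜ.Finite}, Aᶜ).Finite :=
      Set.Finite.biUnion (htfin.subset (Set.sep_subset _ _)) (fun A hA => hA.2)
    set E₀ := ⋃ A ∈ {A ∈ t | Aᶜ.Finite}, Aᶜ with hE₀def
    set t₂ := {A ∈ t | ¬ Aᶜ.Finite} with ht₂def
    have ht₂fin : t₂.Finite := htfin.subset (Set.sep_subset _ _)
    have hQA : ∀ A ∈ ht₂fin.toFinset, ∃ q : (G → ℂ) × ℝ, 0 < q.2 ∧ PHB.MemBDp p S q.1 ∧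
        PHB.InBClosCG p S q.1 ∧ A = {g | ‖q.1 g‖ ≤ q.2} := by
      intro A hA
      rw [Set.Finite.mem_toFinset] at hA
      rcases htD hA.1 with hfin | ⟨f, δ, hδ, hm, hcl, hAeq⟩
      · exact absurd hfin hA.2
      · exact ⟨(f, δ), hδ, hm, hcl, hAeq⟩
    choose qf hq1 hq2 hq3 hq4 using hQA
    set P : Finset ((G → ℂ) × ℝ) := ht₂fin.toFinset.attach.image (fun x => qf x.1 x.2)
      with hPdef
    have hPprop : ∀ q ∈ P, 0 < q.2 ∧ PHB.MemBDp p S q.1 ∧ PHB.InBClosCG p S q.1 := by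
      intro q hq
      rw [hPdef, Finset.mem_image] at hq
      obtain ⟨x, _, rfl⟩ := hq
      exact ⟨hq1 x.1 x.2, hq2 x.1 x.2, hq3 x.1 x.2⟩
    have hcover : ∀ g, g ∉ E₀ → ∃ q ∈ P, q.2 < ‖q.1 g‖ := by
      intro g hg
      have hg' : g ∉ ⋂₀ t := fun h => Set.notMem_empty g (htint h)
      rw [Set.mem_sInter] at hg'
      push_neg at hg'
      obtain ⟨A, hAt, hgA⟩ := hg'
      by_cases hfin : Aᶜ.Finite
      · exfalso
        apply hg
        rw [hE₀def]
        exact Set.mem_biUnion (show A ∈ {A ∈ t | Aᶜ.Finite} from ⟨hAt, hfin⟩)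
          (show g ∈ Aᶜ from hgA)
      · have hAmem : A ∈ ht₂fin.toFinset := by
          rw [Set.Finite.mem_toFinset]; exact ⟨hAt, hfin⟩
        refine ⟨qf A hAmem, Finset.mem_image_of_mem _ (Finset.mem_attach _ ⟨A, hAmem⟩), ?_⟩
        have hAeq := hq4 A hAmem
        rw [hAeq] at hgA
        simp only [Set.mem_setOf_eq, not_le] at hgA
        exact hgA
    by_cases hPne : P.Nonempty
    · refine ⟨⟨1, fun g => by simp⟩, memDp_one hp0.ne' S, ?_⟩
      intro ε hε
      exact approx_one hp0 S P hPne E₀ hE₀fin hPprop hcover hε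
    · exfalso
      rw [Finset.not_nonempty_iff_eq_empty] at hPne
      have hall : ∀ g : G, g ∈ E₀ := by
        intro g
        by_contra hg
        obtain ⟨q, hq, _⟩ := hcover g hg
        rw [hPne] at hq
        exact absurd hq (Finset.notMem_empty q)
      have : (Set.univ : Set G).Finite := hE₀fin.subset (fun g _ => hall g)
      exact Set.infinite_univ this
  · intro h1
    rw [Set.eq_empty_iff_forall_notMem]
    intro x hx
    have hm : PHB.MemBDp p S (1 : G → ℂ) := memBDp_one hp0.ne' S
    have h0 := hx.2 (1 : G → ℂ) hm h1
    rw [x.map_one hm] at h0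
    exact one_ne_zero h0
end

section
/- For f₁, f₂ ∈ BD_p(G), the pairing ⟨Δ_p f₁ − Δ_p f₂, f₁ − f₂⟩ = ∑_{g∈G} ∑_{s∈S} (|f₁(gs⁻¹)−f₁(g)|^{p−2}(f₁(gs⁻¹)−f₁(g)) − |f₂(gs⁻¹)−f₂(g)|^{p−2}(f₂(gs⁻¹)−f₂(g))) · conj((f₁−f₂)(gs⁻¹) − (f₁−f₂)(g)) equals 0 if and only if f₁(gs⁻¹) − f₁(g) = f₂(gs⁻¹) − f₂(g) for all g ∈ G and all s ∈ S. -/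
open Filter Topology

/-!
Write `J z = |z|^{p-2} z` (`pPow p z` below). For complex numbers `z, w` with `r = |z|`, `t = |w|`,
`Re((J z - J w) conj(z - w)) = (r^{p-1} - t^{p-1})(r - t) + (r^{p-2} + t^{p-2})(r t - Re(z conj w))`,
and both summands are nonnegative: the first because `x ↦ x^{p-1}` is strictly increasing, the second
by Cauchy–Schwarz. So every term of the pairing has nonnegative real part, and a vanishing term forces
`r = t` and `Re(z conj w) = r t`, i.e. `|z - w|² = 0`. The pairing is absolutely summable since each
term is bounded by `2(r^p + t^p)`, so it vanishes only if each of its terms does.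
-/

open ComplexConjugate

namespace PHB

section pPow

variable {p : ℝ}

noncomputable def pPow (p : ℝ) (z : ℂ) : ℂ := ((‖z‖ ^ (p - 2) : ℝ) : ℂ) * z

lemma rpow_sub_two_mul_self (hp : 1 < p) {r : ℝ} (hr : 0 ≤ r) : r ^ (p - 2) * r = r ^ (p - 1) := by
  rw [← Real.rpow_add_one' hr (by linarith)]
  ring_nf

lemma rpow_sub_one_mul_self (hp : 1 < p) {r : ℝ} (hr : 0 ≤ r) : r ^ (p - 1) * r = r ^ p := by
  rw [← Real.rpow_add_one' hr (by linarith)]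
  ring_nf

lemma norm_pPow (hp : 1 < p) (z : ℂ) : ‖pPow p z‖ = ‖z‖ ^ (p - 1) := by
  rw [pPow, norm_mul, Complex.norm_real, Real.norm_of_nonneg (by positivity),
    rpow_sub_two_mul_self hp (norm_nonneg z)]

lemma rpow_sub_mul_sub_nonneg {q : ℝ} (hq : 0 ≤ q) {r t : ℝ} (hr : 0 ≤ r) (ht : 0 ≤ t) :
    0 ≤ (r ^ q - t ^ q) * (r - t) := by
  rcases le_total r t with h | h
  · exact mul_nonneg_of_nonpos_of_nonpos
      (sub_nonpos.2 (Real.rpow_le_rpow hr h hq)) (sub_nonpos.2 h)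
  · exact mul_nonneg (sub_nonneg.2 (Real.rpow_le_rpow ht h hq)) (sub_nonneg.2 h)

lemma eq_of_rpow_sub_mul_sub_eq_zero {q : ℝ} (hq : 0 < q) {r t : ℝ} (hr : 0 ≤ r) (ht : 0 ≤ t)
    (h : (r ^ q - t ^ q) * (r - t) = 0) : r = t := by
  rcases mul_eq_zero.1 h with h | h
  · exact (Real.strictMonoOn_rpow_Ici_of_exponent_pos hq).injOn hr ht (sub_eq_zero.1 h)
  · exact sub_eq_zero.1 h

lemma re_mul_conj_le_norm_mul_norm (z w : ℂ) : (z * conj w).re ≤ ‖z‖ * ‖w‖ := by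
  simpa [norm_mul] using Complex.re_le_norm (z * conj w)

lemma eq_of_norm_eq_of_re_mul_conj_eq {z w : ℂ} (hn : ‖z‖ = ‖w‖)
    (hre : (z * conj w).re = ‖z‖ * ‖w‖) : z = w := by
  have : Complex.normSq (z - w) = 0 := by
    rw [Complex.normSq_sub, hre, Complex.normSq_eq_norm_sq, Complex.normSq_eq_norm_sq, hn]
    ring
  exact sub_eq_zero.1 (Complex.normSq_eq_zero.1 this)

lemma re_pPow_sub_mul_conj_sub (hp : 1 < p) (z w : ℂ) :
    ((pPow p z - pPow p w) * conj (z - w)).re =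
      (‖z‖ ^ (p - 1) - ‖w‖ ^ (p - 1)) * (‖z‖ - ‖w‖) +
        (‖z‖ ^ (p - 2) + ‖w‖ ^ (p - 2)) * (‖z‖ * ‖w‖ - (z * conj w).re) := by
  have hz : ‖z‖ * ‖z‖ = z.re * z.re + z.im * z.im := by
    rw [← Complex.normSq_apply, Complex.normSq_eq_norm_sq, sq]
  have hw : ‖w‖ * ‖w‖ = w.re * w.re + w.im * w.im := by
    rw [← Complex.normSq_apply, Complex.normSq_eq_norm_sq, sq]
  rw [← rpow_sub_two_mul_self hp (norm_nonneg z), ← rpow_sub_two_mul_self hp (norm_nonneg w)]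
  simp only [pPow, Complex.mul_re, Complex.mul_im, Complex.sub_re, Complex.sub_im,
    Complex.conj_re, Complex.conj_im, Complex.ofReal_re, Complex.ofReal_im]
  linear_combination -(‖z‖ ^ (p - 2)) * hz - (‖w‖ ^ (p - 2)) * hw

lemma re_pPow_sub_mul_conj_sub_nonneg (hp : 1 < p) (z w : ℂ) :
    0 ≤ ((pPow p z - pPow p w) * conj (z - w)).re := by
  rw [re_pPow_sub_mul_conj_sub hp]
  exact add_nonneg (rpow_sub_mul_sub_nonneg (by linarith) (norm_nonneg z) (norm_nonneg w))
    (mul_nonneg (by positivity) (sub_nonneg.2 (re_mul_conj_le_norm_mul_norm z w)))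

lemma eq_of_re_pPow_sub_mul_conj_sub_eq_zero (hp : 1 < p) {z w : ℂ}
    (h : ((pPow p z - pPow p w) * conj (z - w)).re = 0) : z = w := by
  rw [re_pPow_sub_mul_conj_sub hp] at h
  obtain ⟨hmono, hcs⟩ := (add_eq_zero_iff_of_nonneg
    (rpow_sub_mul_sub_nonneg (by linarith) (norm_nonneg z) (norm_nonneg w))
    (mul_nonneg (by positivity) (sub_nonneg.2 (re_mul_conj_le_norm_mul_norm z w)))).1 h
  have hnorm : ‖z‖ = ‖w‖ :=
    eq_of_rpow_sub_mul_sub_eq_zero (by linarith) (norm_nonneg z) (norm_nonneg w) hmono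
  rcases eq_or_ne z 0 with rfl | hz
  · exact (norm_eq_zero.1 (by simpa using hnorm.symm)).symm
  have hcoef : 0 < ‖z‖ ^ (p - 2) + ‖w‖ ^ (p - 2) :=
    add_pos_of_pos_of_nonneg (Real.rpow_pos_of_pos (norm_pos_iff.2 hz) _) (by positivity)
  refine eq_of_norm_eq_of_re_mul_conj_eq hnorm ?_
  linarith [(mul_eq_zero.1 hcs).resolve_left hcoef.ne']

lemma norm_pPow_sub_mul_conj_sub_le (hp : 1 < p) (z w : ℂ) :
    ‖(pPow p z - pPow p w) * conj (z - w)‖ ≤ 2 * (‖z‖ ^ p + ‖w‖ ^ p) := by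
  rw [norm_mul, Complex.norm_conj]
  calc ‖pPow p z - pPow p w‖ * ‖z - w‖
      ≤ (‖z‖ ^ (p - 1) + ‖w‖ ^ (p - 1)) * (‖z‖ + ‖w‖) := by
        rw [← norm_pPow hp, ← norm_pPow hp]
        gcongr <;> exact norm_sub_le _ _
    _ ≤ 2 * (‖z‖ ^ p + ‖w‖ ^ p) := by
        have := rpow_sub_mul_sub_nonneg (by linarith : 0 ≤ p - 1) (norm_nonneg z) (norm_nonneg w)
        nlinarith [rpow_sub_one_mul_self hp (norm_nonneg z),
          rpow_sub_one_mul_self hp (norm_nonneg w)]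

end pPow

lemma re_eq_zero_of_tsum_sum_eq_zero {ι κ : Type*} {S : Finset κ} {F : ι → κ → ℂ}
    (hF : Summable fun i => ∑ s ∈ S, F i s) (hre : ∀ i, ∀ s ∈ S, 0 ≤ (F i s).re)
    (h : ∑' i, ∑ s ∈ S, F i s = 0) (i : ι) : ∀ s ∈ S, (F i s).re = 0 := by
  have hsum : HasSum (fun i => ∑ s ∈ S, (F i s).re) 0 := by
    simpa [Complex.re_sum, h] using Complex.hasSum_re hF.hasSum
  have hnonneg i : 0 ≤ ∑ s ∈ S, (F i s).re := Finset.sum_nonneg (hre i)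
  refine (Finset.sum_eq_zero_iff_of_nonneg (hre i)).1 ?_
  exact congrFun ((hasSum_zero_iff_of_nonneg hnonneg).1 hsum) i

variable {G : Type*} [Group G]

def incr (f : G → ℂ) (g s : G) : ℂ := f (g * s⁻¹) - f g

/-- The `(g, s)` term of the pairing `⟨Δ_p f₁ − Δ_p f₂, f₁ − f₂⟩`. -/
noncomputable def pairingTerm (p : ℝ) (f₁ f₂ : G → ℂ) (g s : G) : ℂ :=
  (pPow p (incr f₁ g s) - pPow p (incr f₂ g s)) * conj (incr f₁ g s - incr f₂ g s)

lemma summable_sum_pairingTerm {p : ℝ} (hp : 1 < p) {S : Finset G} {f₁ f₂ : G → ℂ}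
    (h₁ : MemDp p S f₁) (h₂ : MemDp p S f₂) :
    Summable fun g => ∑ s ∈ S, pairingTerm p f₁ f₂ g s := by
  refine summable_sum fun s hs => Summable.of_norm_bounded
    (((h₁ s hs).add (h₂ s hs)).mul_left 2) fun g => ?_
  exact norm_pPow_sub_mul_conj_sub_le hp _ _

end PHB

theorem pairing_zero_iff_general {G : Type*} [Group G] (S : Finset G)
    (p : ℝ) (hp : 1 < p) (f1 f2 : G → ℂ)
    (h1 : PHB.MemBDp p S f1) (h2 : PHB.MemBDp p S f2) :
    (∑' g : G, ∑ s ∈ S,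
      (((‖f1 (g * s⁻¹) - f1 g‖ ^ (p - 2) : ℝ) : ℂ) * (f1 (g * s⁻¹) - f1 g) -
        ((‖f2 (g * s⁻¹) - f2 g‖ ^ (p - 2) : ℝ) : ℂ) * (f2 (g * s⁻¹) - f2 g)) *
        (starRingEnd ℂ) ((f1 (g * s⁻¹) - f1 g) - (f2 (g * s⁻¹) - f2 g))) = 0 ↔
    ∀ g : G, ∀ s ∈ S, f1 (g * s⁻¹) - f1 g = f2 (g * s⁻¹) - f2 g := by
  change ∑' g, ∑ s ∈ S, PHB.pairingTerm p f1 f2 g s = 0 ↔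
    ∀ g, ∀ s ∈ S, PHB.incr f1 g s = PHB.incr f2 g s
  constructor
  · intro h g s hs
    have hre := PHB.re_eq_zero_of_tsum_sum_eq_zero (PHB.summable_sum_pairingTerm hp h1.2 h2.2)
      (fun g s _ => PHB.re_pPow_sub_mul_conj_sub_nonneg hp _ _) h g s hs
    exact PHB.eq_of_re_pPow_sub_mul_conj_sub_eq_zero hp hre
  · intro h
    simp +contextual [PHB.pairingTerm, h]

/-- for `f₁, f₂ ∈ BD_p(G)` the pairing
`⟨Δ_p f₁ − Δ_p f₂, f₁ − f₂⟩` vanishes iff the increments of `f₁` and `f₂` agree. -/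
theorem pairing_zero_iff {G : Type*} [Group G] [Infinite G] (S : Finset G)
    (hS : PHB.SymmGen S) (p : ℝ) (hp : 1 < p) (f1 f2 : G → ℂ)
    (h1 : PHB.MemBDp p S f1) (h2 : PHB.MemBDp p S f2) :
    (∑' g : G, ∑ s ∈ S,
      (((‖f1 (g * s⁻¹) - f1 g‖ ^ (p - 2) : ℝ) : ℂ) * (f1 (g * s⁻¹) - f1 g) -
        ((‖f2 (g * s⁻¹) - f2 g‖ ^ (p - 2) : ℝ) : ℂ) * (f2 (g * s⁻¹) - f2 g)) *
        (starRingEnd ℂ) ((f1 (g * s⁻¹) - f1 g) - (f2 (g * s⁻¹) - f2 g))) = 0 ↔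
    ∀ g : G, ∀ s ∈ S, f1 (g * s⁻¹) - f1 g = f2 (g * s⁻¹) - f2 g :=
  pairing_zero_iff_general S p hp f1 f2 h1 h2
end

section
/- Let φ : G → H be a rough isometry between finitely generated groups (with word metrics). Then the pullback φ*f = f ∘ φ maps BD_p(H) into BD_p(G); moreover there is a constant C (depending only on the rough-isometry constants and the generating sets) such that ∑_{g∈G}∑_{s∈S}|φ*f(gs⁻¹) − φ*f(g)|^p ≤ C ∑_{h∈H}∑_{t∈T}|f(ht⁻¹) − f(h)|^p for all f ∈ BD_p(H). -/
open Filter Topology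

/-!
An edge `g — g s⁻¹` of the Cayley graph of `G` is sent by `φ` to two points at distance at most
`R = ⌈a + b⌉` in `H`. Telescoping `f` along a geodesic between them and applying the power-mean
inequality bounds `|f(φ(g s⁻¹)) − f(φ g)|^p` by `R^(p-1)` times the sum of the local `p`-energies
`∑_t |f(h t⁻¹) − f(h)|^p` at the vertices `h` of the geodesic. Two points `g, g'` sharing their
`i`-th vertex have images at distance `≤ 2R`, hence lie within distance `⌈a(2R + b)⌉` of each other
by the lower rough-isometry bound; so for each `i` the map `g ↦ (i-th vertex)` is at most `#B`-to-one,
`B` a ball of that radius, and summing over `g` costs a factor `R · #B`.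
-/

namespace PHB

section WordMetric

variable {G : Type*} [Group G] {S : Finset G}

lemma wordDist_le_length {x y : G} (l : List G) (hl : ∀ a ∈ l, a ∈ S) (h : x⁻¹ * y = l.prod) :
    wordDist S x y ≤ l.length :=
  Nat.sInf_le ⟨l, hl, rfl, h⟩

lemma exists_list_length_eq_wordDist (hS : SymmGen S) (x y : G) :
    ∃ l : List G, (∀ a ∈ l, a ∈ S) ∧ l.length = wordDist S x y ∧ x⁻¹ * y = l.prod := by
  have hmem : x⁻¹ * y ∈ Submonoid.closure ((S : Set G) ∪ (S : Set G)⁻¹) := by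
    rw [← Subgroup.closure_toSubmonoid, hS.2]
    exact Subgroup.mem_top _
  obtain ⟨l, hl, hprod⟩ := Submonoid.exists_list_of_mem_closure hmem
  have hlS : ∀ a ∈ l, a ∈ S := fun a ha =>
    (hl a ha).elim id fun h => by simpa using hS.1 a⁻¹ h
  exact Nat.sInf_mem (s := {n | ∃ l : List G, (∀ a ∈ l, a ∈ S) ∧ l.length = n ∧ x⁻¹ * y = l.prod})
    ⟨l.length, l, hlS, rfl, hprod.symm⟩

lemma wordDist_mul_le_one {t : G} (ht : t ∈ S) (x : G) : wordDist S x (x * t) ≤ 1 :=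
  wordDist_le_length [t] (by simpa using ht) (by simp)

lemma wordDist_one_inv_mul (x y : G) : wordDist S 1 (x⁻¹ * y) = wordDist S x y := by
  simp only [wordDist, inv_one, one_mul]

lemma wordDist_comm (hS : SymmGen S) (x y : G) : wordDist S x y = wordDist S y x := by
  suffices h : ∀ x y : G, wordDist S x y ≤ wordDist S y x from le_antisymm (h x y) (h y x)
  intro x y
  obtain ⟨l, hlS, hlen, hprod⟩ := exists_list_length_eq_wordDist hS y x
  refine hlen ▸ (wordDist_le_length (l.map (·⁻¹)).reverse ?_ ?_).trans_eq (by simp)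
  · simpa using fun a ha => by simpa using hS.1 _ (hlS _ ha)
  · rw [← List.prod_inv_reverse, ← hprod]; group

lemma wordDist_triangle (hS : SymmGen S) (x y z : G) :
    wordDist S x z ≤ wordDist S x y + wordDist S y z := by
  obtain ⟨l₁, hl₁, hlen₁, hprod₁⟩ := exists_list_length_eq_wordDist hS x y
  obtain ⟨l₂, hl₂, hlen₂, hprod₂⟩ := exists_list_length_eq_wordDist hS y z
  refine (wordDist_le_length (l₁ ++ l₂) ?_ ?_).trans_eq (by simp [hlen₁, hlen₂])
  · simpa using fun a ha => (ha.elim (hl₁ a) (hl₂ a))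
  · rw [List.prod_append, ← hprod₁, ← hprod₂]; group

lemma finite_setOf_wordDist_one_le (hS : SymmGen S) (r : ℕ) :
    {x : G | wordDist S 1 x ≤ r}.Finite := by
  refine ((List.finite_length_le S r).image fun l => (l.map Subtype.val).prod).subset ?_
  intro x (hx : wordDist S 1 x ≤ r)
  obtain ⟨l, hlS, hlen, hprod⟩ := exists_list_length_eq_wordDist hS 1 x
  lift l to List S using hlS
  rw [← hlen] at hx
  exact ⟨l, by simpa using hx, by simpa using hprod.symm⟩

end WordMetric

theorem norm_sub_rpow_le_mul_sum_rpow {E : Type*} [SeminormedAddCommGroup E] {p : ℝ} (hp : 1 ≤ p)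
    (u : ℕ → E) (n : ℕ) :
    ‖u n - u 0‖ ^ p ≤ (n : ℝ) ^ (p - 1) * ∑ i ∈ Finset.range n, ‖u (i + 1) - u i‖ ^ p := by
  calc ‖u n - u 0‖ ^ p ≤ (∑ i ∈ Finset.range n, ‖u (i + 1) - u i‖) ^ p := by
        gcongr
        rw [← Finset.sum_range_sub]
        exact norm_sum_le _ _
    _ ≤ (n : ℝ) ^ (p - 1) * ∑ i ∈ Finset.range n, ‖u (i + 1) - u i‖ ^ p := by
        simpa using Real.rpow_sum_le_const_mul_sum_rpow_of_nonneg (Finset.range n) hp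
          fun i _ => norm_nonneg (u (i + 1) - u i)

section LocalEnergy

variable {H : Type*} [Group H] {p : ℝ} {T : Finset H} {f : H → ℂ}

noncomputable def localEnergy (p : ℝ) (T : Finset H) (f : H → ℂ) (h : H) : ℝ :=
  ∑ t ∈ T, dpTerm p f t h

lemma dpTerm_nonneg (p : ℝ) (f : H → ℂ) (t h : H) : 0 ≤ dpTerm p f t h :=
  Real.rpow_nonneg (norm_nonneg _) p

lemma localEnergy_nonneg (h : H) : 0 ≤ localEnergy p T f h :=
  Finset.sum_nonneg fun t _ => dpTerm_nonneg p f t h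

lemma dirSum_nonneg : 0 ≤ dirSum p T f :=
  Finset.sum_nonneg fun t _ => tsum_nonneg (dpTerm_nonneg p f t)

lemma MemDp.summable_localEnergy (hf : MemDp p T f) : Summable (localEnergy p T f) :=
  summable_sum hf

lemma MemDp.tsum_localEnergy (hf : MemDp p T f) : ∑' h, localEnergy p T f h = dirSum p T f :=
  Summable.tsum_finsetSum hf

lemma norm_mul_sub_rpow_le_localEnergy {t : H} (ht : t⁻¹ ∈ T) (h : H) :
    ‖f (h * t) - f h‖ ^ p ≤ localEnergy p T f h := by
  simpa [localEnergy, dpTerm] using Finset.single_le_sum (fun t _ => dpTerm_nonneg p f t h) ht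

lemma norm_mul_prod_sub_rpow_le (hp : 1 ≤ p) (hT : ∀ t ∈ T, t⁻¹ ∈ T) (x : H) {l : List H}
    (hl : ∀ a ∈ l, a ∈ T) {n : ℕ} (hn : l.length ≤ n) :
    ‖f (x * l.prod) - f x‖ ^ p ≤
      (n : ℝ) ^ (p - 1) * ∑ i ∈ Finset.range n, localEnergy p T f (x * (l.take i).prod) := by
  have h := norm_sub_rpow_le_mul_sum_rpow hp (fun i => f (x * (l.take i).prod)) n
  simp only [List.take_of_length_le hn, List.take_zero, List.prod_nil, mul_one] at h
  have step : ∀ i, ‖f (x * (l.take (i + 1)).prod) - f (x * (l.take i).prod)‖ ^ p ≤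
      localEnergy p T f (x * (l.take i).prod) := by
    intro i
    rcases lt_or_ge i l.length with hi | hi
    · rw [List.prod_take_succ l i hi, ← mul_assoc]
      exact norm_mul_sub_rpow_le_localEnergy (hT _ (hl _ (List.getElem_mem hi))) _
    · rw [List.take_of_length_le (by omega), List.take_of_length_le hi, sub_self, norm_zero,
        Real.zero_rpow (by linarith)]
      exact localEnergy_nonneg _
  exact h.trans (by gcongr with i; exact step i)

end LocalEnergy

theorem sum_comp_le_card_mul_tsum {G β : Type*} [Group G] {W : β → ℝ} (hW0 : ∀ y, 0 ≤ W y)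
    (hW : Summable W) {ν : G → β} (B : Finset G) (hν : ∀ x y, ν x = ν y → x⁻¹ * y ∈ B)
    (F : Finset G) : ∑ x ∈ F, W (ν x) ≤ B.card * ∑' y, W y := by
  classical
  have hfibre : ∀ y ∈ F.image ν, (F.filter fun x => ν x = y).card ≤ B.card := by
    intro y hy
    obtain ⟨x₀, -, rfl⟩ := Finset.mem_image.1 hy
    refine Finset.card_le_card_of_injOn (x₀⁻¹ * ·) (fun x hx => ?_) fun x _ x' _ => mul_left_cancel
    exact hν x₀ x (Finset.mem_filter.1 hx).2.symm
  calc ∑ x ∈ F, W (ν x) = ∑ y ∈ F.image ν, (F.filter fun x => ν x = y).card • W y :=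
        Finset.sum_comp W ν
    _ ≤ ∑ y ∈ F.image ν, B.card * W y := by
        gcongr with y hy
        rw [nsmul_eq_mul]
        exact mul_le_mul_of_nonneg_right (by exact_mod_cast hfibre y hy) (hW0 y)
    _ ≤ B.card * ∑' y, W y := by
        rw [← Finset.mul_sum]
        gcongr
        exact hW.sum_le_tsum _ fun y _ => hW0 y

theorem summable_dpTerm_comp_and_tsum_le {G H : Type*} [Group G] [Group H] {T : Finset H}
    (hT : SymmGen T) {p : ℝ} (hp : 1 ≤ p) {φ : G → H} {s : G} {R : ℕ} {B : Finset G}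
    (hR : ∀ g, wordDist T (φ g) (φ (g * s⁻¹)) ≤ R)
    (hB : ∀ g g', wordDist T (φ g) (φ g') ≤ 2 * R → g⁻¹ * g' ∈ B)
    {f : H → ℂ} (hf : MemDp p T f) :
    Summable (dpTerm p (f ∘ φ) s) ∧
      ∑' g, dpTerm p (f ∘ φ) s g ≤ (R : ℝ) ^ (p - 1) * R * B.card * dirSum p T f := by
  choose L hLT hLlen hLprod using fun g => exists_list_length_eq_wordDist hT (φ g) (φ (g * s⁻¹))
  -- `ν i g` is the `i`-th vertex of a geodesic from `φ g` to `φ (g * s⁻¹)`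
  set ν : ℕ → G → H := fun i g => φ g * ((L g).take i).prod
  have hpath : ∀ g, dpTerm p (f ∘ φ) s g ≤
      (R : ℝ) ^ (p - 1) * ∑ i ∈ Finset.range R, localEnergy p T f (ν i g) := by
    intro g
    have hend : φ (g * s⁻¹) = φ g * (L g).prod := by rw [← hLprod]; group
    simpa only [dpTerm, Function.comp_apply, hend] using
      norm_mul_prod_sub_rpow_le hp hT.1 (φ g) (hLT g) ((hLlen g).trans_le (hR g))
  have hvertex : ∀ i g, wordDist T (φ g) (ν i g) ≤ R := fun i g =>
    (wordDist_le_length _ (fun a ha => hLT g a (List.mem_of_mem_take ha)) (by simp [ν])).trans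
      ((List.length_take_le' i _).trans ((hLlen g).trans_le (hR g)))
  have hfibre : ∀ i g g', ν i g = ν i g' → g⁻¹ * g' ∈ B := fun i g g' h => hB g g' <| by
    calc wordDist T (φ g) (φ g') ≤ wordDist T (φ g) (ν i g) + wordDist T (ν i g') (φ g') := by
          rw [h]; exact wordDist_triangle hT _ _ _
      _ ≤ R + R := add_le_add (hvertex i g) (wordDist_comm hT (ν i g') _ ▸ hvertex i g')
      _ = 2 * R := by ring
  have hfin : ∀ F : Finset G, ∑ g ∈ F, dpTerm p (f ∘ φ) s g ≤
      (R : ℝ) ^ (p - 1) * R * B.card * dirSum p T f := fun F =>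
    calc ∑ g ∈ F, dpTerm p (f ∘ φ) s g
        ≤ ∑ g ∈ F, (R : ℝ) ^ (p - 1) * ∑ i ∈ Finset.range R, localEnergy p T f (ν i g) :=
          Finset.sum_le_sum fun g _ => hpath g
      _ = (R : ℝ) ^ (p - 1) * ∑ i ∈ Finset.range R, ∑ g ∈ F, localEnergy p T f (ν i g) := by
          rw [← Finset.mul_sum, Finset.sum_comm]
      _ ≤ (R : ℝ) ^ (p - 1) * ∑ _i ∈ Finset.range R, B.card * dirSum p T f := by
          gcongr with i
          rw [← hf.tsum_localEnergy]
          exact sum_comp_le_card_mul_tsum localEnergy_nonneg hf.summable_localEnergy B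
            (hfibre i) F
      _ = (R : ℝ) ^ (p - 1) * R * B.card * dirSum p T f := by
          rw [Finset.sum_const, Finset.card_range, nsmul_eq_mul]
          ring
  exact ⟨summable_of_sum_le (dpTerm_nonneg p _ s) hfin,
    Real.tsum_le_of_sum_le (dpTerm_nonneg p _ s) hfin⟩

namespace RoughIsom

variable {G H : Type*} [Group G] [Group H] {S : Finset G} {T : Finset H} {φ : G → H} {a b c : ℝ}

lemma wordDist_map_le (hφ : RoughIsom S T φ a b c) {x y : G} {D : ℕ}
    (hD : wordDist S x y ≤ D) : wordDist T (φ x) (φ y) ≤ ⌈a * D + b⌉₊ := by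
  refine Nat.cast_le.1 ((hφ.2.2.2.1 x y).2.trans (le_trans ?_ (Nat.le_ceil _)))
  have ha : 0 ≤ a := zero_le_one.trans hφ.1
  gcongr

lemma wordDist_le_of_wordDist_map_le (hφ : RoughIsom S T φ a b c) {x y : G} {D : ℕ}
    (hD : wordDist T (φ x) (φ y) ≤ D) : wordDist S x y ≤ ⌈a * (D + b)⌉₊ := by
  have ha : 0 < a := zero_lt_one.trans_le hφ.1
  refine Nat.cast_le.1 (le_trans ?_ (Nat.le_ceil _))
  calc (wordDist S x y : ℝ) = a * (1 / a * wordDist S x y) := by field_simp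
    _ ≤ a * (D + b) := by
        gcongr
        linarith [(hφ.2.2.2.1 x y).1, (Nat.cast_le (α := ℝ)).2 hD]

end RoughIsom

end PHB

theorem pullback_BDp_general {G H : Type*} [Group G] [Group H]
    (S : Finset G) (T : Finset H) (hS : PHB.SymmGen S) (hT : PHB.SymmGen T)
    (p : ℝ) (hp : 1 ≤ p) (φ : G → H) (a b c : ℝ) (hφ : PHB.RoughIsom S T φ a b c) :
    ∃ C : ℝ, 0 < C ∧ ∀ f : H → ℂ, PHB.MemBDp p T f →
      PHB.MemBDp p S (f ∘ φ) ∧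
      PHB.dirSum p S (f ∘ φ) ≤ C * PHB.dirSum p T f := by
  open PHB in
  set R := ⌈a + b⌉₊
  set B := (finite_setOf_wordDist_one_le hS ⌈a * (2 * R + b)⌉₊).toFinset
  have hR : ∀ s ∈ S, ∀ g, wordDist T (φ g) (φ (g * s⁻¹)) ≤ R := fun s hs g => by
    simpa using hφ.wordDist_map_le (D := 1) (wordDist_mul_le_one (hS.1 s hs) g)
  have hB : ∀ g g', wordDist T (φ g) (φ g') ≤ 2 * R → g⁻¹ * g' ∈ B := fun g g' h => by
    simpa [B, wordDist_one_inv_mul] using hφ.wordDist_le_of_wordDist_map_le h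
  set C₀ := (R : ℝ) ^ (p - 1) * R * B.card
  have hstep := fun s hs f (hf : MemDp p T f) =>
    summable_dpTerm_comp_and_tsum_le hT hp (hR s hs) hB hf
  refine ⟨S.card * C₀ + 1, by positivity, fun f ⟨⟨M, hM⟩, hf⟩ => ⟨⟨⟨M, fun g => hM (φ g)⟩,
    fun s hs => (hstep s hs f hf).1⟩, ?_⟩⟩
  calc dirSum p S (f ∘ φ) ≤ ∑ _s ∈ S, C₀ * dirSum p T f :=
        Finset.sum_le_sum fun s hs => (hstep s hs f hf).2
    _ = S.card * C₀ * dirSum p T f := by rw [Finset.sum_const, nsmul_eq_mul]; ring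
    _ ≤ (S.card * C₀ + 1) * dirSum p T f := by
        gcongr
        · exact dirSum_nonneg
        · linarith

/-- the pullback along a rough isometry `φ : G → H` maps
`BD_p(H)` into `BD_p(G)`, with Dirichlet sums controlled by a constant `C`
depending only on the rough-isometry constants and the generating sets. -/
theorem pullback_BDp {G H : Type*} [Group G] [Infinite G] [Group H] [Infinite H]
    (S : Finset G) (T : Finset H) (hS : PHB.SymmGen S) (hT : PHB.SymmGen T)
    (p : ℝ) (hp : 1 ≤ p) (φ : G → H) (a b c : ℝ) (hφ : PHB.RoughIsom S T φ a b c) :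
    ∃ C : ℝ, 0 < C ∧ ∀ f : H → ℂ, PHB.MemBDp p T f →
      PHB.MemBDp p S (f ∘ φ) ∧
      PHB.dirSum p S (f ∘ φ) ≤ C * PHB.dirSum p T f :=
  pullback_BDp_general S T hS hT p hp φ a b c hφ
end
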